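/- arXiv:1107.3666 — 9 statements merged into one kernel-verified Lean document; each statement's English description precedes it below -/
import Mathlib

section
/- Let Σ be a finite symmetric generating multiset of a group Γ such that the Cayley graph Cay(Γ,Σ) is not bipartite, and let l be the (odd) length of the shortest odd cycle in Cay(Γ,Σ), i.e., the least odd l such that some product of l elements of Σ equals the identity. Then for every finite-index normal subgroup N of Γ, the smallest eigenvalue of the normalized adjacency matrix of Cay(Γ/N, Σ_N), where Σ_N is the image multiset of Σ in Γ/N, is at least (2/|Σ|^l − 1)^{1/l} (the real l-th root, l being odd), which is a real number strictly greater than −1. -/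
/-! The normalized adjacency matrix `P` of `Cay(Γ/N, Σ_N)` is row-stochastic, and an odd closed
walk of length `l` in `Cay(Γ, Σ)` projects to a closed walk of length `l` at every vertex of the
quotient, so every diagonal entry of `P ^ l` is at least `|Σ|⁻ˡ`. If `λ` is an eigenvalue of `P`,
then `λ ^ l` is an eigenvalue of the row-stochastic matrix `P ^ l`, and Gershgorin's circle
theorem places it within `1 - d` of some diagonal entry `d ≥ |Σ|⁻ˡ`; hence
`λ ^ l ≥ 2 / |Σ| ^ l - 1 = x ^ l`, and `λ ≥ x` because `t ↦ t ^ l` is increasing for odd `l`. -/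

attribute [local instance] Classical.propDecidable

/-- `l` is the length of the shortest odd cycle in `Cay(Γ, S)`: the least odd `l`
such that some product of `l` elements of `S` equals the identity. -/
def ShortestOddCycle {G : Type*} [Group G] (S : Multiset G) (l : ℕ) : Prop :=
  Odd l ∧ (∃ L : List G, (∀ g ∈ L, g ∈ S) ∧ L.length = l ∧ L.prod = 1) ∧
    ∀ l' : ℕ, Odd l' → (∃ L : List G, (∀ g ∈ L, g ∈ S) ∧ L.length = l' ∧ L.prod = 1) → l ≤ l'

/-- The `(x, y)` entry of the normalized adjacency matrix of the Cayley graph of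
`Γ ⧸ K` with respect to the image multiset of `S`: the total multiplicity in `S`
of elements `s` with `x · s = y`, divided by `|S|`. -/
noncomputable def quotAdj {G : Type*} [Group G] (S : Multiset G) (K : Subgroup G)
    (x y : G ⧸ K) : ℝ :=
  ((S.filter (fun s => ∀ g : G, (QuotientGroup.mk g : G ⧸ K) = x →
      (QuotientGroup.mk (g * s) : G ⧸ K) = y)).card : ℝ) / (Multiset.card S : ℝ)

open Matrix Module.End

theorem Matrix.two_mul_sub_one_le_of_hasEigenvalue {n : Type*} [Fintype n] [DecidableEq n]
    {P : Matrix n n ℝ} (hP : P ∈ rowStochastic ℝ n) {d μ : ℝ} (hd : ∀ k, d ≤ P k k)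
    (hμ : HasEigenvalue (toLin' P) μ) : 2 * d - 1 ≤ μ := by
  obtain ⟨k, hk⟩ := eigenvalue_mem_ball hμ
  have hradius : ∑ j ∈ Finset.univ.erase k, ‖P k j‖ = 1 - P k k := by
    rw [← sum_row_of_mem_rowStochastic hP k, ← Finset.add_sum_erase _ _ (Finset.mem_univ k)]
    simp [Real.norm_of_nonneg (nonneg_of_mem_rowStochastic hP)]
  rw [Metric.mem_closedBall, hradius, Real.dist_eq] at hk
  linarith [neg_abs_le (μ - P k k), hd k]

theorem Matrix.pow_length_le_pow_length_apply_mul_list_prod {Q R : Type*} [Monoid Q] [Fintype Q]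
    [DecidableEq Q] [Semiring R] [PartialOrder R] [IsOrderedRing R] {A : Matrix Q Q R}
    (hA : ∀ i j, 0 ≤ A i j) {c : R} (hc : 0 ≤ c) :
    ∀ L : List Q, (∀ t ∈ L, ∀ a, c ≤ A a (a * t)) →
      ∀ a, c ^ L.length ≤ (A ^ L.length) a (a * L.prod)
  | [], _, a => by simp
  | t :: L, hL, a => by
    rw [List.length_cons, pow_succ', pow_succ', mul_apply, List.prod_cons, ← mul_assoc]
    calc c * c ^ L.length ≤ A a (a * t) * (A ^ L.length) (a * t) (a * t * L.prod) :=
          mul_le_mul (hL t List.mem_cons_self a)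
            (pow_length_le_pow_length_apply_mul_list_prod hA hc L
              (fun s hs => hL s (List.mem_cons_of_mem t hs)) (a * t))
            (pow_nonneg hc _) (hA _ _)
      _ ≤ ∑ b, A a b * (A ^ L.length) b (a * t * L.prod) :=
          Finset.single_le_sum (f := fun b => A a b * (A ^ L.length) b (a * t * L.prod))
            (fun b _ => mul_nonneg (hA a b) (pow_apply_nonneg hA _ b _)) (Finset.mem_univ _)

section CayleyQuotient

variable {G : Type*} [Group G] (S : Multiset G) (N : Subgroup G)

theorem quotAdj_nonneg (x y : G ⧸ N) : 0 ≤ quotAdj S N x y := by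
  unfold quotAdj
  positivity

variable [N.Normal]

theorem quotAdj_eq_count (x y : G ⧸ N) :
    quotAdj S N x y =
      ((S.map fun s => x * (QuotientGroup.mk s : G ⧸ N)).count y : ℝ) / Multiset.card S := by
  rw [quotAdj, Multiset.count_map]
  congr 3
  refine Multiset.filter_congr fun (s : G) _ => ?_
  obtain ⟨g, rfl⟩ := QuotientGroup.mk_surjective x
  exact ⟨fun h => (h g rfl).symm, fun h g' hg' => by rw [QuotientGroup.mk_mul, hg', h]⟩

theorem inv_card_le_quotAdj {s : G} (hs : s ∈ S) (x : G ⧸ N) :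
    (Multiset.card S : ℝ)⁻¹ ≤ quotAdj S N x (x * s) := by
  rw [quotAdj_eq_count, inv_eq_one_div]
  gcongr
  exact_mod_cast Multiset.one_le_count_iff_mem.2 (Multiset.mem_map_of_mem _ hs)

theorem of_quotAdj_mem_rowStochastic [Fintype (G ⧸ N)] (hS : S ≠ 0) :
    of (quotAdj S N) ∈ rowStochastic ℝ (G ⧸ N) := by
  refine mem_rowStochastic_iff_sum.2 ⟨quotAdj_nonneg S N, fun x => ?_⟩
  simp only [of_apply, quotAdj_eq_count, ← Finset.sum_div]
  rw [div_eq_one_iff_eq (by exact_mod_cast (Multiset.card_pos.2 hS).ne')]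
  exact_mod_cast (Multiset.sum_count_eq_card fun _ _ => Finset.mem_univ _).trans
    (Multiset.card_map _ _)

end CayleyQuotient

theorem smallest_eigenvalue_bound_general {G : Type*} [Group G] (S : Multiset G)
    (l : ℕ) (hl : ShortestOddCycle S l)
    (N : Subgroup G) (hN : N.Normal) (hfi : N.FiniteIndex) :
    ∀ x : ℝ, x ^ l = 2 / (Multiset.card S : ℝ) ^ l - 1 →
      -1 < x ∧
        ∀ (lam : ℝ) (v : G ⧸ N → ℝ), v ≠ 0 →
          (∀ z : G ⧸ N, (∑ᶠ y : G ⧸ N, quotAdj S N z y * v y) = lam * v z) →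
          x ≤ lam := by
  obtain ⟨hodd, ⟨L, hLS, rfl, hLprod⟩, -⟩ := hl
  have hS : S ≠ 0 := by
    rintro rfl
    obtain ⟨g, hg⟩ := List.exists_mem_of_ne_nil L (by rintro rfl; simp at hodd)
    simpa using hLS g hg
  have hm : 0 < (Multiset.card S : ℝ) ^ L.length := by
    have := Multiset.card_pos.2 hS
    positivity
  intro x hx
  refine ⟨by rw [← hodd.pow_lt_pow, hodd.neg_one_pow, hx]; linarith [div_pos two_pos hm], ?_⟩
  intro lam v hv heig
  have : Fintype (G ⧸ N) := Fintype.ofFinite _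
  have hdiag (a : G ⧸ N) :
      ((Multiset.card S : ℝ) ^ L.length)⁻¹ ≤ (of (quotAdj S N) ^ L.length) a a := by
    have hwalk := pow_length_le_pow_length_apply_mul_list_prod (A := of (quotAdj S N))
      (quotAdj_nonneg S N) (c := (Multiset.card S : ℝ)⁻¹) (by positivity)
      (L.map (QuotientGroup.mk' N))
      (by simpa using fun s hs a => inv_card_le_quotAdj S N (hLS s hs) a) a
    rwa [← map_list_prod, hLprod, map_one, mul_one, List.length_map, inv_pow] at hwalk
  have heigen : HasEigenvalue (toLin' (of (quotAdj S N) ^ L.length)) (lam ^ L.length) := by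
    refine toLin'_pow (of (quotAdj S N)) _ ▸
      (hasEigenvalue_of_hasEigenvector ⟨mem_eigenspace_iff.2 ?_, hv⟩).pow _
    ext z
    simpa [mulVec, dotProduct, finsum_eq_sum_of_fintype] using heig z
  rw [← hodd.pow_le_pow, hx, div_eq_mul_inv]
  exact two_mul_sub_one_le_of_hasEigenvalue (pow_mem (of_quotAdj_mem_rowStochastic S N hS) _)
    hdiag heigen

/-- For a finite-index normal subgroup `N` of `Γ`, every eigenvalue of the normalized
adjacency matrix of `Cay(Γ/N, Σ_N)` is at least `(2/|Σ|^l − 1)^{1/l}` (the real `l`-th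
root, `l` odd, i.e. the unique real `x` with `x^l = 2/|Σ|^l − 1`), a number `> −1`. -/
theorem smallest_eigenvalue_bound {G : Type*} [Group G] (S : Multiset G)
    (hsym : S.map (fun g => g⁻¹) = S)
    (hgen : Subgroup.closure {g : G | g ∈ S} = ⊤)
    (l : ℕ) (hl : ShortestOddCycle S l)
    (N : Subgroup G) (hN : N.Normal) (hfi : N.FiniteIndex) :
    ∀ x : ℝ, x ^ l = 2 / (Multiset.card S : ℝ) ^ l - 1 →
      -1 < x ∧
        ∀ (lam : ℝ) (v : G ⧸ N → ℝ), v ≠ 0 →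
          (∀ z : G ⧸ N, (∑ᶠ y : G ⧸ N, quotAdj S N z y * v y) = lam * v z) →
          x ≤ lam :=
  smallest_eigenvalue_bound_general S l hl N hN hfi
end

section
/- Let (U, P) be a probability space and let A_1, …, A_L (L ≥ 2) be events. Set W(i,j) := P(A_i ∩ A_j) − P(A_i)P(A_j), Δ := max_{1 ≤ i ≠ j ≤ L} |W(i,j)| and M := Σ_{i=1}^{L} P(A_i). If M > 0, then P(U \ ⋃_{1 ≤ i ≤ L} A_i) ≤ (L + L²·Δ)/M². -/
/-!
Put `S = ∑ᵢ 𝟙_{A_i}`, so that `𝔼 S = M` and `Var S = ∑_{i,j} W(i,j)`. The diagonal terms are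
`P(A_i)(1 - P(A_i)) ≤ 1` and the off-diagonal ones are at most `Δ`, so
`Var S ≤ L + (L² - L)Δ ≤ L + L²Δ`.
Outside `⋃ A_i` we have `S = 0`, i.e. `|S - 𝔼 S| = M`, and Chebyshev's inequality bounds the
probability of that event by `Var S / M²`.
-/

open MeasureTheory
open scoped ENNReal

lemma MeasureTheory.memLp_indicator_one {Ω : Type*} {mΩ : MeasurableSpace Ω} {μ : Measure Ω}
    [IsFiniteMeasure μ] (p : ℝ≥0∞) {s : Set Ω} (hs : MeasurableSet s) :
    MemLp (s.indicator (1 : Ω → ℝ)) p μ :=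
  memLp_indicator_const p hs 1 (.inr (measure_ne_top μ s))

namespace ProbabilityTheory

variable {Ω : Type*} {mΩ : MeasurableSpace Ω} {μ : Measure Ω}

lemma covariance_indicator_one [IsProbabilityMeasure μ] {s t : Set Ω} (hs : MeasurableSet s)
    (ht : MeasurableSet t) :
    cov[s.indicator 1, t.indicator 1; μ] = μ.real (s ∩ t) - μ.real s * μ.real t := by
  rw [covariance_eq_sub (memLp_indicator_one 2 hs) (memLp_indicator_one 2 ht),
    ← Set.inter_indicator_one,
    integral_indicator_one (hs.inter ht), integral_indicator_one hs, integral_indicator_one ht]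

lemma measureReal_setOf_eq_zero_mul_sq_integral_le_variance [IsProbabilityMeasure μ] {X : Ω → ℝ}
    (hX : MemLp X 2 μ) : μ.real {ω | X ω = 0} * μ[X] ^ 2 ≤ Var[X; μ] := by
  rcases eq_or_ne μ[X] 0 with hmean | hmean
  · simp [hmean, variance_nonneg X μ]
  have hsub : {ω | X ω = 0} ⊆ {ω | |μ[X]| ≤ |X ω - μ[X]|} := fun ω hω ↦ by
    simp_all
  have hcheb := meas_ge_le_variance_div_sq hX (abs_pos.2 hmean)
  rw [sq_abs] at hcheb
  rw [← le_div_iff₀ (by positivity)]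
  exact (measureReal_mono hsub (measure_ne_top μ _)).trans
    (ENNReal.toReal_le_of_le_ofReal (by positivity [variance_nonneg X μ]) hcheb)

end ProbabilityTheory

lemma Fintype.sum_sum_le_of_diag_le_one_of_offDiag_le {ι : Type*} [Fintype ι]
    [DecidableEq ι] (w : ι → ι → ℝ) {Δ : ℝ} (hdiag : ∀ i, w i i ≤ 1)
    (hoff : ∀ i j, i ≠ j → w i j ≤ Δ) :
    ∑ i, ∑ j, w i j ≤ card ι + ((card ι : ℝ) ^ 2 - card ι) * Δ := by
  have hrow : ∀ i, ∑ j, w i j ≤ 1 + ((card ι : ℝ) - 1) * Δ := fun i ↦ by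
    rw [← Finset.add_sum_erase _ _ (Finset.mem_univ i)]
    gcongr
    · exact hdiag i
    · calc ∑ j ∈ Finset.univ.erase i, w i j ≤ (Finset.univ.erase i).card • Δ :=
            Finset.sum_le_card_nsmul _ _ _ fun j hj ↦ hoff i j (Finset.ne_of_mem_erase hj).symm
        _ = ((card ι : ℝ) - 1) * Δ := by
          rw [Finset.card_erase_of_mem (Finset.mem_univ i), Finset.card_univ, nsmul_eq_mul,
            Nat.cast_pred (card_pos_iff.2 ⟨i⟩)]
  calc ∑ i, ∑ j, w i j ≤ ∑ _i : ι, (1 + ((card ι : ℝ) - 1) * Δ) :=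
        Finset.sum_le_sum fun i _ ↦ hrow i
    _ = card ι + ((card ι : ℝ) ^ 2 - card ι) * Δ := by
        rw [Finset.sum_const, Finset.card_univ, nsmul_eq_mul]
        ring

open ProbabilityTheory in
/-- **Chebyshev-type sieve lemma.** Let `(U, μ)` be a probability space and
`A_1, …, A_L` events (`L ≥ 2`). With `W(i,j) = P(A_i ∩ A_j) − P(A_i)P(A_j)`,
any `Δ` with `|W(i,j)| ≤ Δ` for all `i ≠ j`, and `M = Σ_i P(A_i) > 0`, we have
`P(U \ ⋃ A_i) ≤ (L + L²Δ)/M²`. -/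
theorem chebyshev_sieve {U : Type*} [MeasurableSpace U] (μ : Measure U)
    [IsProbabilityMeasure μ] (L : ℕ) (hL : 2 ≤ L)
    (A : Fin L → Set U) (hA : ∀ i, MeasurableSet (A i))
    (Δ M : ℝ)
    (hΔ : ∀ i j : Fin L, i ≠ j →
      |(μ (A i ∩ A j)).toReal - (μ (A i)).toReal * (μ (A j)).toReal| ≤ Δ)
    (hM : M = ∑ i : Fin L, (μ (A i)).toReal) (hMpos : 0 < M) :
    (μ (Set.univ \ ⋃ i : Fin L, A i)).toReal ≤ ((L : ℝ) + (L : ℝ) ^ 2 * Δ) / M ^ 2 := by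
  set X : Fin L → U → ℝ := fun i ↦ (A i).indicator 1
  have hX : ∀ i, MemLp (X i) 2 μ := fun i ↦ memLp_indicator_one 2 (hA i)
  have hmean : μ[fun ω ↦ ∑ i, X i ω] = M := by
    rw [integral_finsetSum _ fun i _ ↦ (hX i).integrable one_le_two, hM]
    exact Finset.sum_congr rfl fun i _ ↦ integral_indicator_one (hA i)
  have hΔ0 : 0 ≤ Δ := (abs_nonneg _).trans (hΔ ⟨0, by omega⟩ ⟨1, by omega⟩ (by simp))
  have hvar : Var[fun ω ↦ ∑ i, X i ω; μ] ≤ L + L ^ 2 * Δ := by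
    rw [variance_fun_sum hX]
    simp only [X, covariance_indicator_one (hA _) (hA _)]
    refine (Fintype.sum_sum_le_of_diag_le_one_of_offDiag_le _ (fun i ↦ ?_)
      fun i j hij ↦ (le_abs_self _).trans (hΔ i j hij)).trans ?_
    · rw [Set.inter_self]
      nlinarith [measureReal_le_one (μ := μ) (s := A i), measureReal_nonneg (μ := μ) (s := A i)]
    · simp only [Fintype.card_fin]
      nlinarith
  have hzero : Set.univ \ ⋃ i, A i ⊆ {ω | ∑ i, X i ω = 0} := fun ω hω ↦ by
    simp_all [X]
  rw [le_div_iff₀ (by positivity)]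
  calc μ.real (Set.univ \ ⋃ i, A i) * M ^ 2 ≤ μ.real {ω | ∑ i, X i ω = 0} * M ^ 2 := by
        gcongr
        exact measure_ne_top μ _
    _ ≤ Var[fun ω ↦ ∑ i, X i ω; μ] := hmean ▸ measureReal_setOf_eq_zero_mul_sq_integral_le_variance
        (memLp_finsetSum _ fun i _ ↦ hX i)
    _ ≤ L + L ^ 2 * Δ := hvar
end

section
/- Fix s ≥ 2. Let Γ be a finitely generated group with an admissible generating multiset Σ, and let (N_i)_{i≥2} be finite-index normal subgroups of Γ. Write N_{i,j} := N_i ∩ N_j, Γ_{i,j} := Γ/N_{i,j}, and let π_{i,j} : Γ → Γ_{i,j} be the quotient homomorphism. Let Z ⊆ Γ and assume there exist positive constants δ, c, d and subsets T_i ⊆ Γ_{i,i} (i ≥ 2) such that for all i, j ≥ s: (0) T_i ⊆ Γ_{i,i} \ π_{i,i}(Z); (1) for every k ≥ 1 and every subset T ⊆ Γ_{i,j}, |P(π_{i,j}(w_k) ∈ T) − |T|/|Γ_{i,j}|| ≤ √|Γ_{i,j}|·e^{−δk}; (2) |Γ_{i,i}| ≤ i^d; (3) if i ≠ j then |{gN_{i,j}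 : gN_i ∈ T_i and gN_j ∈ T_j}|/|Γ_{i,j}| = (|T_i|/|Γ_{i,i}|)·(|T_j|/|Γ_{j,j}|); (4) |T_i|/|Γ_{i,i}| ≥ c. Then for every k ≥ ((d+1)/δ)·log(2s), P(w_k ∈ Z) ≤ (20/c²)·e^{−δk/(d+1)}. -/
/-!
Second-moment sieve. For `i` in a range `I = [s, M]` let `A i` be the event `π_{i,i}(w_k) ∈ T_i`
and `X` the number of `i ∈ I` for which it occurs, so `X = 0` on `Z` by (0). By (1) and (3)
`E X ≈ μ := ∑ |T_i|/|Γ_{i,i}| ≥ c |I|` and `E X² ≤ μ² + |I| + |I|² ε`, where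
`ε ≥ √|Γ_{i,j}| e^{-δk}` bounds all the equidistribution errors. Chebyshev then gives
`P(w_k ∈ Z) ≤ E (X - μ)² / μ² ≤ (1/|I| + 3ε) / c²`. By (2) `√|Γ_{i,j}| ≤ M^d`, and the choice
`M = ⌊e^{δk/(d+1)}⌋` balances `ε = e^{-δk/(d+1)}` against `1/|I| ≤ 2 e^{-δk/(d+1)}`.
-/

attribute [local instance] Classical.propDecidable

/-- Probability that the `k`-th step of the random walk driven by the
uniform measure on the multiset `S` lies in `Z`. -/
noncomputable def walkProb {G : Type*} [Group G] (S : Multiset G) (k : ℕ) (Z : Set G) : ℝ :=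
  (Nat.card {f : Fin k → Fin S.toList.length //
      (List.ofFn (fun i => S.toList.get (f i))).prod ∈ Z} : ℝ) / (Multiset.card S : ℝ) ^ k

/-- A multiset of group elements is admissible if it is symmetric, its underlying set
generates the group, and the corresponding Cayley graph is not bipartite
(some odd-length product of its elements is the identity). -/
def IsAdmissible {G : Type*} [Group G] (S : Multiset G) : Prop :=
  S.map (fun g => g⁻¹) = S ∧
  Subgroup.closure {g : G | g ∈ S} = ⊤ ∧
  ∃ L : List G, (∀ g ∈ L, g ∈ S) ∧ Odd L.length ∧ L.prod = 1

/-- `Z` is exponentially small with respect to `S`. -/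
def ExpSmallWrt {G : Type*} [Group G] (S : Multiset G) (Z : Set G) : Prop :=
  ∃ C α : ℝ, 0 < C ∧ 0 < α ∧ ∀ k : ℕ, walkProb S k Z ≤ C * Real.exp (-α * k)

/-- `Z` is exponentially small: exponentially small w.r.t. every admissible
generating multiset. -/
def ExpSmall {G : Type*} [Group G] (Z : Set G) : Prop :=
  ∀ S : Multiset G, IsAdmissible S → ExpSmallWrt S Z

open Finset Real

section SecondMoment

variable {Ω G ι : Type*} [Fintype Ω]

lemma natCard_subtype_eq_sum_indicator (w : Ω → G) (E : Set G) :
    (Nat.card {ω // w ω ∈ E} : ℝ) = ∑ ω, E.indicator 1 (w ω) := by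
  rw [Nat.card_eq_fintype_card, Fintype.card_subtype, ← sum_boole]
  simp only [Set.indicator_apply, Pi.one_apply]

/-- Chebyshev's inequality for `X = ∑ i ∈ I, 1_{A i} ∘ w`, which vanishes on `w ⁻¹' Z`. -/
lemma sum_indicator_mul_sq_le (w : Ω → G) (Z : Set G) (I : Finset ι) (A : ι → Set G)
    (hZ : ∀ i ∈ I, Disjoint Z (A i)) (μ : ℝ) :
    (∑ ω, Z.indicator 1 (w ω)) * μ ^ 2 ≤
      ∑ i ∈ I, ∑ j ∈ I, ∑ ω, (A i ∩ A j).indicator 1 (w ω) -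
        2 * μ * ∑ i ∈ I, ∑ ω, (A i).indicator 1 (w ω) + μ ^ 2 * Fintype.card Ω := by
  set X : Ω → ℝ := fun ω => ∑ i ∈ I, (A i).indicator 1 (w ω)
  have hXZ : ∀ ω, Z.indicator 1 (w ω) * μ ^ 2 ≤ (X ω - μ) ^ 2 := by
    intro ω
    by_cases hω : w ω ∈ Z
    · have hX : X ω = 0 := sum_eq_zero fun i hi =>
        Set.indicator_of_notMem ((hZ i hi).notMem_of_mem_left hω) _
      simp [hω, hX]
    · simp [hω, sq_nonneg]
  have hX2 : ∀ ω, X ω ^ 2 = ∑ i ∈ I, ∑ j ∈ I, (A i ∩ A j).indicator 1 (w ω) := by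
    intro ω
    simp only [X, sq, sum_mul_sum, Set.inter_indicator_one, Pi.mul_apply]
  calc (∑ ω, Z.indicator 1 (w ω)) * μ ^ 2
      ≤ ∑ ω, (X ω - μ) ^ 2 := by rw [sum_mul]; exact sum_le_sum fun ω _ => hXZ ω
    _ = ∑ ω, (X ω ^ 2 - 2 * μ * X ω + μ ^ 2) := by congr! 1; ring
    _ = _ := by
      simp only [sum_add_distrib, sum_sub_distrib, ← mul_sum, hX2, X, sum_const, card_univ,
        nsmul_eq_mul]
      rw [sum_comm (s := univ)]
      simp only [sum_comm (s := univ) (t := I)]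
      ring

end SecondMoment

lemma natCard_subtype_div_natCard_le_one {α : Type*} (p : α → Prop) :
    (Nat.card {a // p a} : ℝ) / Nat.card α ≤ 1 := by
  cases finite_or_infinite α
  · exact div_le_one_of_le₀ (by exact_mod_cast Finite.card_subtype_le p) (Nat.cast_nonneg _)
  · simp [Nat.card_eq_zero_of_infinite]

lemma sum_sum_le_sq_add {ι : Type*} (I : Finset ι) (q : ι → ι → ℝ) (p : ι → ℝ) {ε : ℝ}
    (hε : 0 ≤ ε) (hdiag : ∀ i ∈ I, q i i ≤ 1)
    (hoff : ∀ i ∈ I, ∀ j ∈ I, i ≠ j → q i j ≤ p i * p j + ε) :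
    ∑ i ∈ I, ∑ j ∈ I, q i j ≤ (∑ i ∈ I, p i) ^ 2 + (#I : ℝ) ^ 2 * ε + #I := by
  have hq : ∀ i ∈ I, ∀ j ∈ I, q i j ≤ p i * p j + ε + if i = j then 1 else 0 := by
    intro i hi j hj
    by_cases hij : i = j
    · subst hij
      simp only [if_true]
      linarith [hdiag i hi, mul_self_nonneg (p i)]
    · simpa [hij] using hoff i hi j hj hij
  calc ∑ i ∈ I, ∑ j ∈ I, q i j
      ≤ ∑ i ∈ I, ∑ j ∈ I, (p i * p j + ε + if i = j then 1 else 0) :=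
        sum_le_sum fun i hi => sum_le_sum fun j hj => hq i hi j hj
    _ = _ := by
      simp only [sum_add_distrib, sq, sum_mul_sum, sum_ite_eq, sum_const, nsmul_eq_mul]
      simp only [sum_ite_mem, inter_self, sum_const, nsmul_eq_mul, mul_one]
      ring

section Walk

variable {G ι : Type*} [Group G]

lemma walkProb_eq_natCard_div (S : Multiset G) (k : ℕ) (E : Set G) :
    walkProb S k E =
      Nat.card {f : Fin k → Fin S.toList.length //
          (List.ofFn fun i => S.toList.get (f i)).prod ∈ E} /
        Nat.card (Fin k → Fin S.toList.length) := by
  rw [walkProb, Nat.card_fun, Nat.card_fin, Nat.card_fin, Nat.cast_pow,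
    ← Multiset.length_toList S]

lemma walkProb_nonneg (S : Multiset G) (k : ℕ) (E : Set G) : 0 ≤ walkProb S k E := by
  unfold walkProb
  positivity

lemma walkProb_le_one (S : Multiset G) (k : ℕ) (E : Set G) : walkProb S k E ≤ 1 := by
  rw [walkProb_eq_natCard_div]
  exact natCard_subtype_div_natCard_le_one _

lemma walkProb_mul_sq_le (S : Multiset G) (k : ℕ) (Z : Set G) (I : Finset ι) (A : ι → Set G)
    (hZ : ∀ i ∈ I, Disjoint Z (A i)) (μ : ℝ) :
    walkProb S k Z * μ ^ 2 ≤
      ∑ i ∈ I, ∑ j ∈ I, walkProb S k (A i ∩ A j) - 2 * μ * ∑ i ∈ I, walkProb S k (A i) +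
        μ ^ 2 := by
  simp only [walkProb_eq_natCard_div, natCard_subtype_eq_sum_indicator, ← sum_div]
  rw [Nat.card_eq_fintype_card]
  set n : ℝ := ↑(Fintype.card (Fin k → Fin S.toList.length))
  rw [div_mul_eq_mul_div]
  calc _ ≤ _ / n :=
        div_le_div_of_nonneg_right (sum_indicator_mul_sq_le _ Z I A hZ μ) (Nat.cast_nonneg _)
    _ ≤ _ := by
      rw [add_div, sub_div, mul_div_assoc (μ ^ 2), mul_div_assoc, sum_div]
      simp only [sum_div]
      gcongr
      exact mul_le_of_le_one_right (sq_nonneg μ) (div_self_le_one n)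

theorem walkProb_le_of_sieve (S : Multiset G) (k : ℕ) (Z : Set G)
    {I : Finset ι} (hI : I.Nonempty) (A : ι → Set G) (p : ι → ℝ) {c ε : ℝ} (hc : 0 < c)
    (hZ : ∀ i ∈ I, Disjoint Z (A i)) (hp : ∀ i ∈ I, c ≤ p i ∧ p i ≤ 1)
    (hA : ∀ i ∈ I, |walkProb S k (A i) - p i| ≤ ε)
    (hAA : ∀ i ∈ I, ∀ j ∈ I, i ≠ j → walkProb S k (A i ∩ A j) ≤ p i * p j + ε) :
    walkProb S k Z ≤ ((#I : ℝ)⁻¹ + 3 * ε) / c ^ 2 := by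
  set μ := ∑ i ∈ I, p i
  set m : ℝ := ↑(#I)
  have hm : 0 < m := Nat.cast_pos.mpr hI.card_pos
  have hε : 0 ≤ ε := by
    obtain ⟨i, hi⟩ := hI
    exact (abs_nonneg _).trans (hA i hi)
  have hcheb := walkProb_mul_sq_le S k Z I A hZ μ
  have hlin : μ - m * ε ≤ ∑ i ∈ I, walkProb S k (A i) := by
    calc μ - m * ε = ∑ i ∈ I, (p i - ε) := by simp [μ, m, sum_sub_distrib]
      _ ≤ _ := sum_le_sum fun i hi => by linarith [(abs_le.mp (hA i hi)).1]
  have hquad := sum_sum_le_sq_add I (fun i j => walkProb S k (A i ∩ A j)) p hε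
    (fun i _ => (Set.inter_self (A i)).symm ▸ walkProb_le_one S k (A i)) hAA
  have hμc : m * c ≤ μ := by
    simpa [m, μ] using card_nsmul_le_sum I p c fun i hi => (hp i hi).1
  have hμm : μ ≤ m := by
    simpa [m, μ] using sum_le_card_nsmul I p 1 fun i hi => (hp i hi).2
  have hμ : 0 ≤ μ := (mul_pos hm hc).le.trans hμc
  -- `W μ² ≤ m + m² ε + 2 μ m ε ≤ m + 3 m² ε`, and `m c ≤ μ`
  have key : walkProb S k Z * (m * c) ^ 2 ≤ m + 3 * m ^ 2 * ε := by
    have hmc : (m * c) ^ 2 ≤ μ ^ 2 := pow_le_pow_left₀ (by positivity) hμc 2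
    nlinarith [mul_le_mul_of_nonneg_left hmc (walkProb_nonneg S k Z),
      mul_le_mul_of_nonneg_left hlin (by positivity : 0 ≤ 2 * μ),
      mul_le_mul_of_nonneg_right hμm (by positivity : 0 ≤ m * ε)]
  rw [le_div_iff₀ (by positivity)]
  calc walkProb S k Z * c ^ 2 = walkProb S k Z * (m * c) ^ 2 / m ^ 2 := by field_simp
    _ ≤ (m + 3 * m ^ 2 * ε) / m ^ 2 := by gcongr
    _ = m⁻¹ + 3 * ε := by field_simp

end Walk

lemma rpow_mul_exp_neg_le {a d x : ℝ} (hd : 0 ≤ d) (hx : 0 ≤ x) (hxa : x ≤ exp (a / (d + 1))) :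
    x ^ d * exp (-a) ≤ exp (-(a / (d + 1))) := by
  calc x ^ d * exp (-a) ≤ exp (a / (d + 1)) ^ d * exp (-a) := by gcongr
    _ = exp (-(a / (d + 1))) := by
      rw [← exp_mul, ← exp_add]
      congr 1
      field_simp
      ring

section Quotient

variable {Γ ι : Type*} [Group Γ]

lemma preimage_mk_setOf_exists_mk {L H K : Subgroup Γ} (hH : L ≤ H) (hK : L ≤ K)
    (U : Set (Γ ⧸ H)) (V : Set (Γ ⧸ K)) :
    {g : Γ | (g : Γ ⧸ L) ∈
        {x : Γ ⧸ L | ∃ g' : Γ, (g' : Γ ⧸ L) = x ∧ (g' : Γ ⧸ H) ∈ U ∧ (g' : Γ ⧸ K) ∈ V}} =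
      {g : Γ | (g : Γ ⧸ H) ∈ U} ∩ {g : Γ | (g : Γ ⧸ K) ∈ V} := by
  ext g
  simp only [Set.mem_ofPred_eq, Set.mem_inter_iff]
  constructor
  · rintro ⟨g', hg', hU, hV⟩
    have hL := QuotientGroup.eq.mp hg'
    exact ⟨QuotientGroup.eq.mpr (hH hL) ▸ hU, QuotientGroup.eq.mpr (hK hL) ▸ hV⟩
  · rintro ⟨hU, hV⟩
    exact ⟨g, rfl, hU, hV⟩

lemma sqrt_natCard_quotient_inf_le {H K : Subgroup Γ} {x : ℝ}
    (hH : (Nat.card (Γ ⧸ H) : ℝ) ≤ x) (hK : (Nat.card (Γ ⧸ K) : ℝ) ≤ x) :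
    √(Nat.card (Γ ⧸ (H ⊓ K)) : ℝ) ≤ x := by
  have hx : 0 ≤ x := (Nat.cast_nonneg _).trans hH
  have hHK : (Nat.card (Γ ⧸ (H ⊓ K)) : ℝ) ≤ x * x := by
    have := Nat.cast_le (α := ℝ) |>.mpr (Subgroup.index_inf_le (H := H) (K := K))
    push_cast [Subgroup.index] at this
    exact this.trans (mul_le_mul hH hK (Nat.cast_nonneg _) hx)
  exact (Real.sqrt_le_sqrt hHK).trans_eq (Real.sqrt_mul_self hx)

lemma sqrt_natCard_quotient_inf_mul_exp_le {H K : Subgroup Γ} {a d x : ℝ} (hd : 0 ≤ d)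
    (hx : 0 ≤ x) (hxa : x ≤ exp (a / (d + 1))) (hH : (Nat.card (Γ ⧸ H) : ℝ) ≤ x ^ d)
    (hK : (Nat.card (Γ ⧸ K) : ℝ) ≤ x ^ d) :
    √(Nat.card (Γ ⧸ (H ⊓ K)) : ℝ) * exp (-a) ≤ exp (-(a / (d + 1))) :=
  (mul_le_mul_of_nonneg_right (sqrt_natCard_quotient_inf_le hH hK) (exp_pos _).le).trans
    (rpow_mul_exp_neg_le hd hx hxa)

theorem walkProb_le_of_quotient_sieve (S : Multiset Γ) (k : ℕ) (Z : Set Γ) (N : ι → Subgroup Γ)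
    (T : (i : ι) → Set (Γ ⧸ (N i ⊓ N i))) {I : Finset ι} (hI : I.Nonempty) {c ε : ℝ}
    (hc : 0 < c) (hZ : ∀ i ∈ I, ∀ g ∈ Z, (g : Γ ⧸ (N i ⊓ N i)) ∉ T i)
    (hunif : ∀ i ∈ I, ∀ j ∈ I, ∀ T' : Set (Γ ⧸ (N i ⊓ N j)),
      |walkProb S k {g : Γ | (g : Γ ⧸ (N i ⊓ N j)) ∈ T'} -
          (Nat.card T' : ℝ) / Nat.card (Γ ⧸ (N i ⊓ N j))| ≤ ε)
    (hindep : ∀ i ∈ I, ∀ j ∈ I, i ≠ j →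
      (Nat.card {x : Γ ⧸ (N i ⊓ N j) | ∃ g : Γ, (g : Γ ⧸ (N i ⊓ N j)) = x ∧
            (g : Γ ⧸ (N i ⊓ N i)) ∈ T i ∧ (g : Γ ⧸ (N j ⊓ N j)) ∈ T j} : ℝ) /
          Nat.card (Γ ⧸ (N i ⊓ N j)) =
        (Nat.card (T i) : ℝ) / Nat.card (Γ ⧸ (N i ⊓ N i)) *
          ((Nat.card (T j) : ℝ) / Nat.card (Γ ⧸ (N j ⊓ N j))))
    (hdens : ∀ i ∈ I, c ≤ (Nat.card (T i) : ℝ) / Nat.card (Γ ⧸ (N i ⊓ N i))) :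
    walkProb S k Z ≤ ((#I : ℝ)⁻¹ + 3 * ε) / c ^ 2 := by
  refine walkProb_le_of_sieve S k Z hI (fun i => {g : Γ | (g : Γ ⧸ (N i ⊓ N i)) ∈ T i})
    (fun i => (Nat.card (T i) : ℝ) / Nat.card (Γ ⧸ (N i ⊓ N i))) hc
    (fun i hi => Set.disjoint_left.2 fun g hg => hZ i hi g hg)
    (fun i hi => ⟨hdens i hi, natCard_subtype_div_natCard_le_one (· ∈ T i)⟩)
    (fun i hi => hunif i hi i hi (T i)) fun i hi j hj hij => ?_
  rw [← preimage_mk_setOf_exists_mk (le_inf inf_le_left inf_le_left)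
    (le_inf inf_le_right inf_le_right), ← hindep i hi j hj hij]
  exact sub_le_iff_le_add'.1 ((le_abs_self _).trans (hunif i hi j hj _))

end Quotient

lemma le_exp_of_div_mul_log_le {a b x y : ℝ} (ha : 0 < a) (hb : 0 < b) (hy : 0 < y)
    (h : a / b * log y ≤ x) : y ≤ exp (b * x / a) := by
  rw [← log_le_iff_le_exp hy, le_div_iff₀ ha]
  rw [div_mul_eq_mul_div, div_le_iff₀ hb] at h
  linarith

lemma inv_card_Icc_floor_exp_le {s : ℕ} {t : ℝ} (hst : 2 * s ≤ exp t) :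
    ((#(Icc s ⌊exp t⌋₊) : ℕ) : ℝ)⁻¹ ≤ 2 * exp (-t) := by
  have hs : s ≤ ⌊exp t⌋₊ := Nat.le_floor (by linarith [(Nat.cast_nonneg s : (0 : ℝ) ≤ s)])
  have hcard : exp t / 2 ≤ #(Icc s ⌊exp t⌋₊) := by
    rw [Nat.card_Icc, Nat.cast_sub (by omega)]
    push_cast
    linarith [Nat.lt_floor_add_one (exp t)]
  rw [exp_neg, ← div_eq_mul_inv, ← inv_div]
  exact inv_anti₀ (by positivity) hcard

theorem large_sieve_general {Γ : Type*} [Group Γ]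
    (S : Multiset Γ)
    (s : ℕ) (hs : 2 ≤ s)
    (N : ℕ → Subgroup Γ)
    (Z : Set Γ) (δ c d : ℝ) (hδ : 0 < δ) (hc : 0 < c) (hd : 0 < d)
    (T : (i : ℕ) → Set (Γ ⧸ (N i ⊓ N i)))
    -- (0) `T_i ⊆ Γ_{i,i} \ π_{i,i}(Z)`
    (h0 : ∀ i : ℕ, s ≤ i → ∀ g : Γ, g ∈ Z →
      (QuotientGroup.mk g : Γ ⧸ (N i ⊓ N i)) ∉ T i)
    -- (1) almost uniform distribution in each `Γ_{i,j}`
    (h1 : ∀ i j : ℕ, s ≤ i → s ≤ j → ∀ k : ℕ, 1 ≤ k →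
      ∀ T' : Set (Γ ⧸ (N i ⊓ N j)),
        |walkProb S k {g : Γ | (QuotientGroup.mk g : Γ ⧸ (N i ⊓ N j)) ∈ T'} -
            (Nat.card ↥T' : ℝ) / (Nat.card (Γ ⧸ (N i ⊓ N j)) : ℝ)| ≤
          Real.sqrt (Nat.card (Γ ⧸ (N i ⊓ N j))) * Real.exp (-δ * k))
    -- (2) polynomial growth of the quotients
    (h2 : ∀ i : ℕ, s ≤ i → (Nat.card (Γ ⧸ (N i ⊓ N i)) : ℝ) ≤ (i : ℝ) ^ d)
    -- (3) independence
    (h3 : ∀ i j : ℕ, s ≤ i → s ≤ j → i ≠ j →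
      (Nat.card {x : Γ ⧸ (N i ⊓ N j) | ∃ g : Γ, QuotientGroup.mk g = x ∧
            (QuotientGroup.mk g : Γ ⧸ (N i ⊓ N i)) ∈ T i ∧
            (QuotientGroup.mk g : Γ ⧸ (N j ⊓ N j)) ∈ T j} : ℝ) /
          (Nat.card (Γ ⧸ (N i ⊓ N j)) : ℝ) =
        ((Nat.card ↥(T i) : ℝ) / (Nat.card (Γ ⧸ (N i ⊓ N i)) : ℝ)) *
          ((Nat.card ↥(T j) : ℝ) / (Nat.card (Γ ⧸ (N j ⊓ N j)) : ℝ)))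
    -- (4) positive density of each `T_i`
    (h4 : ∀ i : ℕ, s ≤ i →
      c ≤ (Nat.card ↥(T i) : ℝ) / (Nat.card (Γ ⧸ (N i ⊓ N i)) : ℝ)) :
    ∀ k : ℕ, ((d + 1) / δ) * Real.log (2 * s) ≤ (k : ℝ) →
      walkProb S k Z ≤ (20 / c ^ 2) * Real.exp (-δ * k / (d + 1)) := by
  intro k hk
  simp only [neg_mul, neg_div] at h1 ⊢
  set t := δ * k / (d + 1)
  have hs2 : (2 : ℝ) ≤ s := by exact_mod_cast hs
  have hst : 2 * (s : ℝ) ≤ exp t := le_exp_of_div_mul_log_le (by linarith) hδ (by linarith) hk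
  have hk1 : 1 ≤ k :=
    Nat.cast_pos.mp (lt_of_lt_of_le (mul_pos (by positivity) (log_pos (by linarith))) hk)
  set I := Icc s ⌊exp t⌋₊
  have hcard : ∀ i ∈ I, (Nat.card (Γ ⧸ (N i ⊓ N i)) : ℝ) ≤ (⌊exp t⌋₊ : ℝ) ^ d := fun i hi =>
    (h2 i (mem_Icc.1 hi).1).trans
      (rpow_le_rpow (by positivity) (by exact_mod_cast (mem_Icc.1 hi).2) hd.le)
  have herr : ∀ i ∈ I, ∀ j ∈ I,
      √(Nat.card (Γ ⧸ (N i ⊓ N j)) : ℝ) * exp (-(δ * k)) ≤ exp (-t) := fun i hi j hj => by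
    simpa only [inf_idem] using sqrt_natCard_quotient_inf_mul_exp_le hd.le (Nat.cast_nonneg _)
      (Nat.floor_le (exp_pos t).le) (hcard i hi) (hcard j hj)
  calc walkProb S k Z ≤ ((#I : ℝ)⁻¹ + 3 * exp (-t)) / c ^ 2 :=
        walkProb_le_of_quotient_sieve S k Z N T (nonempty_Icc.2 (Nat.le_floor (by linarith))) hc
          (fun i hi => h0 i (mem_Icc.1 hi).1)
          (fun i hi j hj T' => (h1 i j (mem_Icc.1 hi).1 (mem_Icc.1 hj).1 k hk1 T').trans
            (herr i hi j hj))
          (fun i hi j hj => h3 i j (mem_Icc.1 hi).1 (mem_Icc.1 hj).1)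
          (fun i hi => h4 i (mem_Icc.1 hi).1)
    _ ≤ (2 * exp (-t) + 3 * exp (-t)) / c ^ 2 := by gcongr; exact inv_card_Icc_floor_exp_le hst
    _ ≤ 20 / c ^ 2 * exp (-t) := by
      rw [div_mul_eq_mul_div]
      gcongr
      linarith [exp_pos (-t)]

/-- **The large sieve theorem (explicit form).** -/
theorem large_sieve {Γ : Type*} [Group Γ] (hfg : Group.FG Γ)
    (S : Multiset Γ) (hS : IsAdmissible S)
    (s : ℕ) (hs : 2 ≤ s)
    (N : ℕ → Subgroup Γ)
    (hN : ∀ i : ℕ, 2 ≤ i → (N i).Normal ∧ (N i).FiniteIndex)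
    (Z : Set Γ) (δ c d : ℝ) (hδ : 0 < δ) (hc : 0 < c) (hd : 0 < d)
    (T : (i : ℕ) → Set (Γ ⧸ (N i ⊓ N i)))
    -- (0) `T_i ⊆ Γ_{i,i} \ π_{i,i}(Z)`
    (h0 : ∀ i : ℕ, s ≤ i → ∀ g : Γ, g ∈ Z →
      (QuotientGroup.mk g : Γ ⧸ (N i ⊓ N i)) ∉ T i)
    -- (1) almost uniform distribution in each `Γ_{i,j}`
    (h1 : ∀ i j : ℕ, s ≤ i → s ≤ j → ∀ k : ℕ, 1 ≤ k →
      ∀ T' : Set (Γ ⧸ (N i ⊓ N j)),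
        |walkProb S k {g : Γ | (QuotientGroup.mk g : Γ ⧸ (N i ⊓ N j)) ∈ T'} -
            (Nat.card ↥T' : ℝ) / (Nat.card (Γ ⧸ (N i ⊓ N j)) : ℝ)| ≤
          Real.sqrt (Nat.card (Γ ⧸ (N i ⊓ N j))) * Real.exp (-δ * k))
    -- (2) polynomial growth of the quotients
    (h2 : ∀ i : ℕ, s ≤ i → (Nat.card (Γ ⧸ (N i ⊓ N i)) : ℝ) ≤ (i : ℝ) ^ d)
    -- (3) independence
    (h3 : ∀ i j : ℕ, s ≤ i → s ≤ j → i ≠ j →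
      (Nat.card {x : Γ ⧸ (N i ⊓ N j) | ∃ g : Γ, QuotientGroup.mk g = x ∧
            (QuotientGroup.mk g : Γ ⧸ (N i ⊓ N i)) ∈ T i ∧
            (QuotientGroup.mk g : Γ ⧸ (N j ⊓ N j)) ∈ T j} : ℝ) /
          (Nat.card (Γ ⧸ (N i ⊓ N j)) : ℝ) =
        ((Nat.card ↥(T i) : ℝ) / (Nat.card (Γ ⧸ (N i ⊓ N i)) : ℝ)) *
          ((Nat.card ↥(T j) : ℝ) / (Nat.card (Γ ⧸ (N j ⊓ N j)) : ℝ)))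
    -- (4) positive density of each `T_i`
    (h4 : ∀ i : ℕ, s ≤ i →
      c ≤ (Nat.card ↥(T i) : ℝ) / (Nat.card (Γ ⧸ (N i ⊓ N i)) : ℝ)) :
    ∀ k : ℕ, ((d + 1) / δ) * Real.log (2 * s) ≤ (k : ℝ) →
      walkProb S k Z ≤ (20 / c ^ 2) * Real.exp (-δ * k / (d + 1)) :=
  large_sieve_general S s hs N Z δ c d hδ hc hd T h0 h1 h2 h3 h4
end

section
/- Fix n ≥ 2 and m ≥ 2. Let p be a prime satisfying p ≥ 3·(n choose 2) + 1 and p ≡ 1 (mod m). Then |{g^m : g ∈ SL_n(ℤ/pℤ)}| ≤ (1 − 1/(6·n!))·|SL_n(ℤ/pℤ)|. -/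
/-!
Let `T` be the diagonal torus of `G = SL_n(𝔽_p)` and `S ⊆ T` the set of regular elements
(pairwise distinct diagonal entries) that are not `m`-th powers in `T`. As `m ∣ p - 1`, `T`
contains an element of order `m`, so at most `|T| / 2` elements of `T` are `m`-th powers; the
bound on `p` leaves at most `|T| / 3` non-regular elements; hence `|S| ≥ |T| / 6`.

A regular diagonal matrix has centralizer `T`. So if `g ^ m` is conjugate to some `s ∈ S`, then a
conjugate of `g` commutes with `s`, lies in `T`, and `s` would be an `m`-th power in `T`: the
conjugates of `S` are not `m`-th powers. Each of them has `|G| / |T|` conjugates, and a conjugacy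
class meets `S` in at most `n!` points (the permutations of the diagonal), so `G` has at least
`|S| · |G| / (n! · |T|) ≥ |G| / (6 · n!)` elements that are not `m`-th powers.
-/

open Finset Function Matrix

theorem MonoidHom.card_ker_mul_card_of_surjective {G G' : Type*} [Group G] [Group G']
    (f : G →* G') (hf : Surjective f) : Nat.card f.ker * Nat.card G' = Nat.card G := by
  rw [← f.ker.card_mul_index, Subgroup.index_ker, MonoidHom.range_eq_top.2 hf, Subgroup.card_top]

theorem orderOf_mul_card_range_powMonoidHom_le {A : Type*} [CommGroup A] [Finite A] (a : A) :
    orderOf a * Nat.card (powMonoidHom (orderOf a) : A →* A).range ≤ Nat.card A := by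
  rw [← (powMonoidHom (orderOf a) : A →* A).ker.card_mul_index, Subgroup.index_ker]
  exact Nat.mul_le_mul_right _
    (Nat.le_of_dvd Nat.card_pos (Subgroup.orderOf_dvd_natCard _ (pow_orderOf_eq_one a)))

theorem card_conj_eq_le_card_centralizer {G : Type*} [Group G] [Finite G] (a x : G) :
    Nat.card {g : G // g * a * g⁻¹ = x} ≤ Nat.card (Subgroup.centralizer {a}) := by
  rcases isEmpty_or_nonempty {g : G // g * a * g⁻¹ = x} with h | ⟨g₀, hg₀⟩
  · simp
  refine Nat.card_le_card_of_injective (fun g => ⟨g₀⁻¹ * g.1, ?_⟩)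
    fun g h e => Subtype.ext (mul_left_cancel (congrArg Subtype.val e))
  rw [Subgroup.mem_centralizer_singleton_iff]
  calc g₀⁻¹ * g.1 * a = g₀⁻¹ * (g.1 * a * g.1⁻¹) * g.1 := by group
    _ = g₀⁻¹ * (g₀ * a * g₀⁻¹) * g.1 := by rw [g.2, hg₀]
    _ = a * (g₀⁻¹ * g.1) := by group

/-- The fibre has at most `k` distinct second coordinates `a`, and over each of them it is a coset
of the centralizer of `f a`. -/
theorem card_filter_conj_eq_le {G α : Type*} [Group G] [Fintype G] [DecidableEq G]
    [DecidableEq α] (s : Finset α) (f : α → G) {c k : ℕ}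
    (hc : ∀ a ∈ s, Nat.card (Subgroup.centralizer {f a}) ≤ c)
    (hk : ∀ x, {a | a ∈ s ∧ IsConj (f a) x}.ncard ≤ k) (x : G) :
    #{ga ∈ (univ : Finset G) ×ˢ s | ga.1 * f ga.2 * ga.1⁻¹ = x} ≤ k * c := by
  set F := {ga ∈ (univ : Finset G) ×ˢ s | ga.1 * f ga.2 * ga.1⁻¹ = x}
  have hsnd : ∀ a ∈ F.image Prod.snd, #{ga ∈ F | ga.2 = a} ≤ c := by
    intro a ha
    obtain ⟨_, hga, rfl⟩ := mem_image.1 ha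
    refine le_trans ?_ (hc _ (mem_product.1 (mem_filter.1 hga).1).2)
    refine le_trans ?_ (card_conj_eq_le_card_centralizer _ x)
    rw [Nat.card_eq_fintype_card, Fintype.card_subtype]
    refine card_le_card_of_injOn Prod.fst (fun gb hgb => ?_) fun gb hgb gb' hgb' e => ?_
    · simp only [coe_filter, Set.mem_ofPred_eq, F, mem_filter] at hgb ⊢
      exact ⟨mem_univ _, hgb.2 ▸ hgb.1.2⟩
    · simp only [coe_filter, Set.mem_ofPred_eq, F, mem_filter] at hgb hgb'
      exact Prod.ext e (hgb.2.trans hgb'.2.symm)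
  calc #F ≤ c * #(F.image Prod.snd) := card_le_mul_card_image F c hsnd
    _ ≤ c * k := by
      rw [← Set.ncard_coe_finset]
      refine Nat.mul_le_mul_left _ (le_trans (Set.ncard_le_ncard (fun a ha => ?_)
        (s.finite_toSet.subset fun _ h => h.1)) (hk x))
      obtain ⟨⟨g, b⟩, hgb, rfl⟩ := mem_image.1 ha
      simp only [F, mem_filter, mem_product] at hgb
      exact ⟨hgb.1.2, isConj_iff.2 ⟨g, hgb.2⟩⟩
    _ = k * c := mul_comm _ _

theorem card_mul_ncard_le_mul_ncard_isConj {G α : Type*} [Group G] [Finite G] [Finite α]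
    (s : Set α) (f : α → G) {c k : ℕ} (hc : ∀ a ∈ s, Nat.card (Subgroup.centralizer {f a}) ≤ c)
    (hk : ∀ x, {a | a ∈ s ∧ IsConj (f a) x}.ncard ≤ k) :
    Nat.card G * s.ncard ≤ k * c * {x | ∃ a ∈ s, IsConj (f a) x}.ncard := by
  classical
  have := Fintype.ofFinite G
  obtain ⟨s, rfl⟩ : ∃ t : Finset α, ↑t = s := ⟨s.toFinite.toFinset, s.toFinite.coe_toFinset⟩
  simp only [mem_coe] at hc hk ⊢
  let Φ : G × α → G := fun ga => ga.1 * f ga.2 * ga.1⁻¹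
  have himage : (((univ : Finset G) ×ˢ s).image Φ : Set G) ⊆ {x | ∃ a ∈ s, IsConj (f a) x} := by
    intro x hx
    obtain ⟨⟨g, a⟩, hga, rfl⟩ := mem_image.1 hx
    exact ⟨a, (mem_product.1 hga).2, isConj_iff.2 ⟨g, rfl⟩⟩
  calc Nat.card G * (s : Set α).ncard = #((univ : Finset G) ×ˢ s) := by
        rw [Set.ncard_coe_finset, card_product, card_univ, Nat.card_eq_fintype_card]
    _ ≤ k * c * #(((univ : Finset G) ×ˢ s).image Φ) :=
        card_le_mul_card_image _ _ fun x _ => card_filter_conj_eq_le s f hc hk x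
    _ ≤ _ := by
      rw [← Set.ncard_coe_finset]
      exact Nat.mul_le_mul_left _ (Set.ncard_le_ncard himage (Set.toFinite _))

theorem Function.eq_of_not_injective_of_card_eq_two {α β : Type*} [Fintype α]
    (h2 : Fintype.card α = 2) {f : α → β} (hf : ¬Injective f) (a b : α) : f a = f b := by
  classical
  obtain ⟨i, j, hfij, hij⟩ := not_injective_iff.1 hf
  have hall : ∀ x, f x = f i := fun x => by
    have hx : x ∈ ({i, j} : Finset α) := by
      rw [eq_univ_of_card _ ((card_pair hij).trans h2.symm)]
      exact mem_univ x
    rcases mem_insert.1 hx with rfl | hx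
    · rfl
    · rw [mem_singleton.1 hx, hfij]
  rw [hall a, hall b]

namespace Matrix

variable {ι R : Type*} [Fintype ι] [DecidableEq ι] [CommRing R] [IsDomain R]

theorem eq_of_diagonal_mul_eq_mul_diagonal {d d' : ι → R} {A : Matrix ι ι R}
    (h : diagonal d * A = A * diagonal d') {i j : ι} (hA : A i j ≠ 0) : d i = d' j := by
  have hij := congr_fun₂ h i j
  rw [diagonal_mul, mul_diagonal, mul_comm] at hij
  exact mul_left_cancel₀ hA hij

theorem eq_diagonal_of_diagonal_mul_eq {d : ι → R} (hd : Injective d) {A : Matrix ι ι R}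
    (h : diagonal d * A = A * diagonal d) : A = diagonal fun i => A i i := by
  ext i j
  rcases eq_or_ne i j with rfl | hij
  · simp
  · rw [diagonal_apply_ne _ hij]
    by_contra hA
    exact hij (hd (eq_of_diagonal_mul_eq_mul_diagonal h hA))

theorem exists_perm_eq_comp_of_diagonal_mul_eq {d d' : ι → R} (hd : Injective d)
    {A : Matrix ι ι R} (hA : A.det ≠ 0) (h : diagonal d * A = A * diagonal d') :
    ∃ σ : Equiv.Perm ι, d' = d ∘ σ := by
  have hrow : ∀ i, ∃ j, A i j ≠ 0 := fun i => by
    by_contra! h0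
    exact hA (det_eq_zero_of_row_eq_zero i h0)
  choose f hf using hrow
  have hdf : ∀ i, d i = d' (f i) := fun i => eq_of_diagonal_mul_eq_mul_diagonal h (hf i)
  have hf_inj : Injective f := fun i i' hii' => hd (by rw [hdf, hdf, hii'])
  let σ := Equiv.ofBijective f hf_inj.bijective_of_finite
  refine ⟨σ.symm, funext fun j => ?_⟩
  simp [hdf, σ, Equiv.ofBijective_apply_symm_apply]

end Matrix

section

variable (ι R : Type*) [Fintype ι] [CommRing R]

/-- The diagonal torus of `SL_ι(R)`, encoded by the diagonal entries (see `diagTorus.toSL`). -/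
def diagTorus : Subgroup (ι → Rˣ) := (∏ i, Pi.evalMonoidHom (fun _ => Rˣ) i).ker

end

namespace diagTorus

variable {ι R : Type*} [Fintype ι] [CommRing R]

theorem mem_iff {v : ι → Rˣ} : v ∈ diagTorus ι R ↔ ∏ i, v i = 1 := by
  simp [diagTorus, MonoidHom.finsetProd_apply]

variable (ι R) in
def regularNonPowers (m : ℕ) : Set (diagTorus ι R) :=
  {v | Injective v.1 ∧ v ∉ (powMonoidHom m : diagTorus ι R →* _).range}

variable [DecidableEq ι]

def toSL : diagTorus ι R →* SpecialLinearGroup ι R where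
  toFun v := ⟨diagonal fun i => (v.1 i : R), by
    rw [det_diagonal, ← Units.coe_prod, mem_iff.1 v.2, Units.val_one]⟩
  map_one' := Subtype.ext diagonal_one
  map_mul' v w := Subtype.ext (diagonal_mul_diagonal _ _).symm

theorem coe_toSL (v : diagTorus ι R) :
    (toSL v : Matrix ι ι R) = diagonal fun i => (v.1 i : R) := rfl

theorem toSL_injective : Injective (toSL : diagTorus ι R →* SpecialLinearGroup ι R) := by
  intro v w h
  ext i : 3
  simpa [coe_toSL] using congr_fun₂ (congrArg Subtype.val h) i i

variable [IsDomain R]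

theorem mem_range_toSL_of_commute {v : diagTorus ι R} (hv : Injective v.1)
    {g : SpecialLinearGroup ι R} (h : Commute (toSL v) g) :
    g ∈ (toSL : diagTorus ι R →* _).range := by
  have hd : Injective fun i => (v.1 i : R) := Units.val_injective.comp hv
  have hg : (g : Matrix ι ι R) = diagonal fun i => (g : Matrix ι ι R) i i :=
    eq_diagonal_of_diagonal_mul_eq hd (by simpa [coe_toSL] using congrArg Subtype.val h.eq)
  have hprod : ∏ i, (g : Matrix ι ι R) i i = 1 := by rw [← det_diagonal, ← hg, g.2]
  have hunit : ∀ i, IsUnit ((g : Matrix ι ι R) i i) :=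
    IsUnit.prod_univ_iff.1 (by rw [hprod]; exact isUnit_one)
  refine ⟨⟨fun i => (hunit i).unit, mem_iff.2 (Units.ext ?_)⟩, Subtype.ext ?_⟩
  · simpa [Units.coe_prod] using hprod
  · exact hg.symm

theorem mem_range_pow_of_isConj {v : diagTorus ι R} (hv : Injective v.1) {m : ℕ}
    {g x : SpecialLinearGroup ι R} (hx : IsConj (toSL v) x) (hg : g ^ m = x) :
    v ∈ (powMonoidHom m : diagTorus ι R →* _).range := by
  obtain ⟨c, rfl⟩ := isConj_iff.1 hx
  have hpow : (c⁻¹ * g * c) ^ m = toSL v := by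
    rw [show c⁻¹ * g * c = c⁻¹ * g * c⁻¹⁻¹ by rw [inv_inv], conj_pow, hg]
    group
  obtain ⟨w, hw⟩ := mem_range_toSL_of_commute hv (hpow ▸ (Commute.self_pow _ m).symm)
  exact ⟨w, toSL_injective (by rw [powMonoidHom_apply, map_pow, hw, hpow])⟩

theorem disjoint_range_pow_isConj_regularNonPowers (m : ℕ) :
    Disjoint (Set.range fun g : SpecialLinearGroup ι R => g ^ m)
      {x | ∃ v ∈ regularNonPowers ι R m, IsConj (toSL v) x} :=
  Set.disjoint_left.2 fun _ ⟨_, hg⟩ ⟨_, hv, hvx⟩ => hv.2 (mem_range_pow_of_isConj hv.1 hvx hg)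

theorem exists_perm_of_isConj {v w : diagTorus ι R} (hv : Injective v.1)
    (h : IsConj (toSL v) (toSL w)) : ∃ σ : Equiv.Perm ι, w.1 = v.1 ∘ σ := by
  obtain ⟨c, hc⟩ := isConj_iff.1 h
  have hcomm : toSL v * c⁻¹ = c⁻¹ * toSL w := by
    rw [← hc]
    group
  have hmat : diagonal (fun i => (v.1 i : R)) * (c⁻¹ : SpecialLinearGroup ι R) =
      (c⁻¹ : SpecialLinearGroup ι R) * diagonal fun i => (w.1 i : R) := by
    simpa [coe_toSL] using congrArg (fun A : SpecialLinearGroup ι R => (A : Matrix ι ι R)) hcomm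
  obtain ⟨σ, hσ⟩ := exists_perm_eq_comp_of_diagonal_mul_eq (Units.val_injective.comp hv)
    (ne_of_eq_of_ne (c⁻¹).2 one_ne_zero) hmat
  exact ⟨σ, funext fun i => Units.ext (congr_fun hσ i)⟩

theorem ncard_isConj_toSL_le {s : Set (diagTorus ι R)} (hs : ∀ v ∈ s, Injective v.1)
    (x : SpecialLinearGroup ι R) :
    {v | v ∈ s ∧ IsConj (toSL v) x}.ncard ≤ (Fintype.card ι).factorial := by
  rcases Set.eq_empty_or_nonempty {v | v ∈ s ∧ IsConj (toSL v) x} with he | ⟨v, hv⟩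
  · rw [he, Set.ncard_empty]
    exact Nat.zero_le _
  calc _ ≤ (Set.range fun σ : Equiv.Perm ι => v.1 ∘ σ).ncard := by
        refine Set.ncard_le_ncard_of_injOn Subtype.val (fun w hw => ?_) Subtype.val_injective.injOn
        obtain ⟨σ, hσ⟩ := exists_perm_of_isConj (hs v hv.1) (hv.2.trans hw.2.symm)
        exact ⟨σ, hσ.symm⟩
    _ ≤ Nat.card (Equiv.Perm ι) := by
        rw [← Set.image_univ, ← Set.ncard_univ]
        exact Set.ncard_image_le
    _ = _ := by rw [Nat.card_eq_fintype_card, Fintype.card_perm]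

variable [Finite R]

theorem card_centralizer_toSL_le {v : diagTorus ι R} (hv : Injective v.1) :
    Nat.card (Subgroup.centralizer {toSL v}) ≤ Nat.card (diagTorus ι R) :=
  calc _ ≤ Nat.card (toSL : diagTorus ι R →* _).range := Subgroup.card_le_of_le fun _ hg =>
        mem_range_toSL_of_commute hv (Subgroup.mem_centralizer_singleton_iff.1 hg).symm
    _ = _ := Nat.card_congr (MonoidHom.ofInjective toSL_injective).toEquiv.symm

theorem card_le_mul_ncard_isConj_regularNonPowers {m c : ℕ}
    (hS : Nat.card (diagTorus ι R) ≤ c * (regularNonPowers ι R m).ncard) :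
    Nat.card (SpecialLinearGroup ι R) ≤ c * (Fintype.card ι).factorial *
      {x | ∃ v ∈ regularNonPowers ι R m, IsConj (toSL v) x}.ncard := by
  have hX := card_mul_ncard_le_mul_ncard_isConj (regularNonPowers ι R m) toSL
    (fun v hv => card_centralizer_toSL_le hv.1) (ncard_isConj_toSL_le fun v hv => hv.1)
  refine Nat.le_of_mul_le_mul_right (c := Nat.card (diagTorus ι R)) ?_ Nat.card_pos
  calc _ ≤ Nat.card (SpecialLinearGroup ι R) * (c * (regularNonPowers ι R m).ncard) :=
        Nat.mul_le_mul_left _ hS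
    _ = c * (Nat.card (SpecialLinearGroup ι R) * (regularNonPowers ι R m).ncard) := by ring
    _ ≤ _ := Nat.mul_le_mul_left _ hX
    _ = _ := by ring

section FiniteField

variable {K : Type*} [Field K]

theorem ncard_apply_eq_apply_mul {i j k : ι} (hij : i ≠ j) (hki : k ≠ i) (hkj : k ≠ j) :
    {v : diagTorus ι K | v.1 i = v.1 j}.ncard * (Nat.card K - 1) = Nat.card (diagTorus ι K) := by
  let ρ : diagTorus ι K →* Kˣ :=
    (Pi.evalMonoidHom (fun _ : ι => Kˣ) i / Pi.evalMonoidHom _ j).comp (diagTorus ι K).subtype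
  have hρ : Surjective ρ := fun a =>
    ⟨⟨Pi.mulSingle i a * Pi.mulSingle k a⁻¹, by simp [mem_iff, prod_mul_distrib]⟩,
      by simp [ρ, hij.symm, hkj.symm, hki]⟩
  have hker : {v : diagTorus ι K | v.1 i = v.1 j} = ρ.ker := by
    ext v
    simp [ρ, div_eq_one]
  rw [hker, ← Nat.card_coe_set_eq, ← Nat.card_units K]
  exact MonoidHom.card_ker_mul_card_of_surjective ρ hρ

variable [Finite K]

theorem card_eq [Nonempty ι] :
    Nat.card (diagTorus ι K) = (Nat.card K - 1) ^ (Fintype.card ι - 1) := by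
  obtain ⟨i₀⟩ := ‹Nonempty ι›
  have hsurj : Surjective ⇑(∏ i, Pi.evalMonoidHom (fun _ : ι => Kˣ) i) := fun z =>
    ⟨Pi.mulSingle i₀ z, by simp [MonoidHom.finsetProd_apply]⟩
  have h := MonoidHom.card_ker_mul_card_of_surjective _ hsurj
  rw [Nat.card_fun, Nat.card_units, Nat.card_eq_fintype_card (α := ι)] at h
  have hq : 0 < Nat.card K - 1 := Nat.card_units K ▸ Nat.card_pos
  refine Nat.eq_of_mul_eq_mul_right hq ?_
  rw [← pow_succ, Nat.sub_add_cancel Fintype.card_pos]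
  exact h

theorem exists_orderOf_eq {i j : ι} (hij : i ≠ j) {m : ℕ} (hm : m ∣ Nat.card K - 1) :
    ∃ t : diagTorus ι K, orderOf t = m := by
  obtain ⟨z, hz⟩ := IsCyclic.exists_ofOrder_eq_natCard (α := Kˣ)
  rw [Nat.card_units] at hz
  let φ : Kˣ →* diagTorus ι K :=
    MonoidHom.codRestrict
      (MonoidHom.mulSingle (fun _ : ι => Kˣ) i / MonoidHom.mulSingle (fun _ : ι => Kˣ) j) _
      fun a => by simp [mem_iff, prod_div_distrib]
  have hφ : Injective φ := fun a b h => by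
    have hi : (Pi.mulSingle i a / Pi.mulSingle j a : ι → Kˣ) i =
        (Pi.mulSingle i b / Pi.mulSingle j b : ι → Kˣ) i :=
      congr_fun (congrArg Subtype.val h) i
    simpa [hij] using hi
  refine ⟨φ (z ^ (orderOf z / m)), ?_⟩
  rw [orderOf_injective φ hφ, orderOf_pow_orderOf_div (orderOf_pos z).ne' (hz ▸ hm)]

theorem ncard_not_injective_mul_le (h3 : 3 ≤ Fintype.card ι) :
    {v : diagTorus ι K | ¬Injective v.1}.ncard * (Nat.card K - 1) ≤
      (Fintype.card ι).choose 2 * Nat.card (diagTorus ι K) := by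
  let A : Finset ι → Set (diagTorus ι K) := fun s => {v | ∀ i ∈ s, ∀ j ∈ s, v.1 i = v.1 j}
  have hcover : {v : diagTorus ι K | ¬Injective v.1} ⊆ ⋃ s ∈ univ.powersetCard 2, A s := by
    intro v hv
    obtain ⟨i, j, hvij, hij⟩ := not_injective_iff.1 hv
    refine Set.mem_biUnion (x := {i, j}) (mem_powersetCard.2 ⟨subset_univ _, card_pair hij⟩) ?_
    simp only [A, Set.mem_ofPred_eq, mem_insert, mem_singleton]
    rintro a (rfl | rfl) b (rfl | rfl) <;> simp [hvij]
  have hA : ∀ s ∈ univ.powersetCard 2,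
      (A s).ncard * (Nat.card K - 1) ≤ Nat.card (diagTorus ι K) := by
    intro s hs
    obtain ⟨i, j, hij, rfl⟩ := card_eq_two.1 (mem_powersetCard.1 hs).2
    obtain ⟨k, -, hk⟩ := exists_mem_notMem_of_card_lt_card (s := {i, j}) (t := univ)
      (by rw [card_pair hij, card_univ]; omega)
    rw [← ncard_apply_eq_apply_mul hij (fun h => hk (h ▸ mem_insert_self _ _))
      (fun h => hk (h ▸ mem_insert_of_mem (mem_singleton_self _)))]
    exact Nat.mul_le_mul_right _ (Set.ncard_le_ncard fun v hv =>
      hv i (mem_insert_self _ _) j (mem_insert_of_mem (mem_singleton_self _)))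
  calc _ ≤ (∑ s ∈ univ.powersetCard 2, (A s).ncard) * (Nat.card K - 1) :=
        Nat.mul_le_mul_right _ ((Set.ncard_le_ncard hcover).trans (set_ncard_biUnion_le _ _))
    _ ≤ ∑ s ∈ univ.powersetCard 2, Nat.card (diagTorus ι K) := by
        rw [sum_mul]
        exact sum_le_sum hA
    _ = _ := by rw [sum_const, card_powersetCard, card_univ, smul_eq_mul]

omit [DecidableEq ι] in
theorem ncard_not_injective_le_two (h2 : Fintype.card ι = 2) :
    {v : diagTorus ι K | ¬Injective v.1}.ncard ≤ 2 := by
  obtain ⟨i₀⟩ : Nonempty ι := Fintype.card_pos_iff.1 (by omega)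
  have hconst : ∀ v : diagTorus ι K, ¬Injective v.1 → ∀ i, v.1 i = v.1 i₀ := fun v hv i =>
    eq_of_not_injective_of_card_eq_two h2 hv i i₀
  calc _ ≤ ({1, -1} : Set Kˣ).ncard := by
        refine Set.ncard_le_ncard_of_injOn (fun v => v.1 i₀) (fun v hv => ?_)
          fun v hv w hw h => ?_
        · have hsq : v.1 i₀ * v.1 i₀ = 1 := by
            have := mem_iff.1 v.2
            rwa [prod_congr rfl fun i _ => hconst v hv i, prod_const, card_univ, h2, sq] at this
          exact (Units.inv_eq_self_iff _).1 (inv_eq_of_mul_eq_one_right hsq)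
        · exact Subtype.ext (funext fun i => by rw [hconst v hv, hconst w hw]; exact h)
    _ ≤ 2 := (Set.ncard_insert_le _ _).trans (by rw [Set.ncard_singleton])

theorem three_mul_ncard_not_injective_le (h3 : 3 ≤ Fintype.card ι)
    (hq : 3 * (Fintype.card ι).choose 2 ≤ Nat.card K - 1) :
    3 * {v : diagTorus ι K | ¬Injective v.1}.ncard ≤ Nat.card (diagTorus ι K) := by
  refine Nat.le_of_mul_le_mul_right (c := Nat.card K - 1) ?_ (Nat.card_units K ▸ Nat.card_pos)
  nlinarith [ncard_not_injective_mul_le (K := K) h3]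

omit [DecidableEq ι] in
theorem three_mul_ncard_not_injective_le_of_card_eq_two (h2 : Fintype.card ι = 2)
    (hq : 7 ≤ Nat.card K) :
    3 * {v : diagTorus ι K | ¬Injective v.1}.ncard ≤ Nat.card (diagTorus ι K) := by
  classical
  have : Nonempty ι := Fintype.card_pos_iff.1 (by omega)
  have hN := ncard_not_injective_le_two (K := K) h2
  rw [card_eq, h2, show 2 - 1 = 1 from rfl, pow_one]
  omega

theorem card_le_six_mul_ncard_regularNonPowers {m : ℕ} (hm : 2 ≤ m) (hmq : m ∣ Nat.card K - 1)
    {i j : ι} (hij : i ≠ j)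
    (hN : 3 * {v : diagTorus ι K | ¬Injective v.1}.ncard ≤ Nat.card (diagTorus ι K)) :
    Nat.card (diagTorus ι K) ≤ 6 * (regularNonPowers ι K m).ncard := by
  obtain ⟨t, rfl⟩ := exists_orderOf_eq hij hmq
  set P := (powMonoidHom (orderOf t) : diagTorus ι K →* _).range
  have hP : 2 * Nat.card P ≤ Nat.card (diagTorus ι K) :=
    (Nat.mul_le_mul_right _ hm).trans (orderOf_mul_card_range_powMonoidHom_le t)
  have hcover : Nat.card (diagTorus ι K) ≤ (regularNonPowers ι K (orderOf t)).ncard +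
      {v : diagTorus ι K | ¬Injective v.1}.ncard + (P : Set (diagTorus ι K)).ncard := by
    rw [← Set.ncard_univ]
    refine (Set.ncard_le_ncard fun v _ => ?_).trans ((Set.ncard_union_le _ _).trans
      (Nat.add_le_add_right (Set.ncard_union_le _ _) _))
    simp only [regularNonPowers, Set.mem_union, Set.mem_ofPred_eq, SetLike.mem_coe]
    tauto
  have hPcard : (P : Set (diagTorus ι K)).ncard = Nat.card P := (Nat.card_coe_set_eq _).symm
  omega

end FiniteField

/-- For `n = 2` and `p = 5` the torus has only four elements, two of them non-regular, and the
general count fails; but then `m ∣ 4` is even, and `diag(2, 3)` is not even a square. -/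
theorem regularNonPowers_zmod_five_nonempty {m : ℕ} (hm : Even m) :
    (regularNonPowers (Fin 2) (ZMod 5) m).Nonempty := by
  set u : (ZMod 5)ˣ := ZMod.unitOfCoprime 2 (by norm_num)
  have hu2 : (u : ZMod 5) = 2 := rfl
  have hu : u ≠ u⁻¹ := fun h => by
    have h1 := congrArg Units.val (mul_inv_cancel u)
    rw [← h, Units.val_mul, hu2, Units.val_one] at h1
    exact absurd h1 (by decide)
  have hsq : ∀ a : ZMod 5, a ^ 2 ≠ 2 := by decide
  refine ⟨⟨![u, u⁻¹], by simp [mem_iff]⟩, fun a b hab => ?_, ?_⟩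
  · fin_cases a <;> fin_cases b
    all_goals first | rfl | exact absurd hab hu | exact absurd hab.symm hu
  · rintro ⟨w, hw⟩
    obtain ⟨k, rfl⟩ := hm
    apply hsq ((w.1 0 : ZMod 5) ^ k)
    have := congrArg Units.val (congr_fun (congrArg Subtype.val hw) 0)
    rw [← pow_mul, mul_two, ← hu2]
    simpa using this

theorem card_le_six_mul_ncard_regularNonPowers_zmod {n m p : ℕ} [Fact p.Prime]
    (hn : 2 ≤ n) (hm : 2 ≤ m) (hp : 3 * n.choose 2 + 1 ≤ p) (hpm : p % m = 1) :
    Nat.card (diagTorus (Fin n) (ZMod p)) ≤ 6 * (regularNonPowers (Fin n) (ZMod p) m).ncard := by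
  have hmp : m ∣ Nat.card (ZMod p) - 1 := by
    rw [Nat.card_zmod, ← hpm]
    exact Nat.dvd_sub_mod p
  have hij : (⟨0, by omega⟩ : Fin n) ≠ ⟨1, by omega⟩ := by simp
  obtain hn3 | rfl : 3 ≤ n ∨ n = 2 := by omega
  · refine card_le_six_mul_ncard_regularNonPowers hm hmp hij
      (three_mul_ncard_not_injective_le ?_ ?_) <;> simp only [Fintype.card_fin, Nat.card_zmod]
    all_goals omega
  obtain hp7 | rfl : 7 ≤ p ∨ p = 5 := by
    have hprime := (Fact.out : p.Prime)
    simp only [Nat.choose_self] at hp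
    by_contra! h
    obtain ⟨h7, h5⟩ := h
    interval_cases p <;> first | exact absurd rfl h5 | norm_num at hprime
  · refine card_le_six_mul_ncard_regularNonPowers hm hmp hij
      (three_mul_ncard_not_injective_le_of_card_eq_two (Fintype.card_fin 2) ?_)
    rwa [Nat.card_zmod]
  · have hmeven : Even m := by
      have hm4 : m ∣ 4 := by simpa using hmp
      have : m ≤ 4 := Nat.le_of_dvd (by norm_num) hm4
      interval_cases m <;> first | decide | norm_num at hm4
    have hS := (Set.ncard_pos (Set.toFinite _)).2 (regularNonPowers_zmod_five_nonempty hmeven)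
    have hT : Nat.card (diagTorus (Fin 2) (ZMod 5)) = 4 := by simp [card_eq]
    omega

end diagTorus

open diagTorus

/-- **Powers in `SL_n(ℤ/pℤ)`.** If `p ≥ 3·C(n,2) + 1` is prime and `p ≡ 1 (mod m)`,
then the set of `m`-th powers in `SL_n(ℤ/pℤ)` has size at most
`(1 − 1/(6·n!))·|SL_n(ℤ/pℤ)|`. -/
theorem powers_in_SL_mod_p (n m p : ℕ) (hn : 2 ≤ n) (hm : 2 ≤ m) (hp : p.Prime)
    (hplarge : 3 * n.choose 2 + 1 ≤ p) (hpm : p % m = 1) :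
    (Nat.card {x : Matrix.SpecialLinearGroup (Fin n) (ZMod p) |
        ∃ g : Matrix.SpecialLinearGroup (Fin n) (ZMod p), g ^ m = x} : ℝ) ≤
      (1 - 1 / (6 * (n.factorial : ℝ))) *
        (Nat.card (Matrix.SpecialLinearGroup (Fin n) (ZMod p)) : ℝ) := by
  have := Fact.mk hp
  set G := SpecialLinearGroup (Fin n) (ZMod p)
  set X := {x : G | ∃ v ∈ regularNonPowers (Fin n) (ZMod p) m, IsConj (toSL v) x}
  have hGX : Nat.card G ≤ 6 * n.factorial * X.ncard := by
    have h := card_le_mul_ncard_isConj_regularNonPowers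
      (card_le_six_mul_ncard_regularNonPowers_zmod hn hm hplarge hpm)
    rwa [Fintype.card_fin] at h
  have hdisj : Disjoint {x : G | ∃ g, g ^ m = x} X := disjoint_range_pow_isConj_regularNonPowers m
  have hPX : Nat.card {x : G | ∃ g, g ^ m = x} + X.ncard ≤ Nat.card G := by
    rw [Nat.card_coe_set_eq, ← Set.ncard_union_eq hdisj]
    exact Set.ncard_le_card _
  have hX : (Nat.card G : ℝ) / (6 * n.factorial) ≤ X.ncard := by
    rw [div_le_iff₀ (by positivity)]
    exact_mod_cast (by linarith : Nat.card G ≤ X.ncard * (6 * n.factorial))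
  have hPX' : (Nat.card {x : G | ∃ g, g ^ m = x} : ℝ) + X.ncard ≤ Nat.card G := by
    exact_mod_cast hPX
  calc _ ≤ (Nat.card G : ℝ) - Nat.card G / (6 * n.factorial) := by linarith
    _ = _ := by ring
end

section
/- Let p_1 < p_2 < … < p_r be prime numbers, q := p_1⋯p_r, and R := ℤ[1/q]. For each 1 ≤ i ≤ r let |·|_i be an absolute value on the algebraic closure ℚ̄ of ℚ extending the p_i-adic absolute value of ℚ, fix an embedding of ℚ̄ into ℂ and let |·|_0 be the restriction to ℚ̄ of the complex absolute value. Then for every n ≥ 1 there exists a constant c > 1 such that for every nonzero x ∈ ℚ̄ which is integral over R and whose minimal polynomial over ℚ has degree at most n, either x is a root of unity, or |y|_i ≥ c for some 0 ≤ i ≤ r and some Galois conjugate y of x (i.e., some root y ∈ ℚ̄ of the minimal polynomial of x over ℚ). -/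
/-!
Suppose all conjugates of `x` are `< c` at `∞` and at every `p_i`, where `c ^ n < 2`. The
coefficients of the minimal polynomial of `x` are elementary symmetric functions of the conjugates,
so by the ultrametric inequality they are `p_i`-adically `< 2 ≤ p_i`, i.e. `p_i`-integral; as `x`
is integral over `ℤ[1/q]` they have `q`-power denominators, so they are integers. The Mahler
measure of this integer polynomial is at most `c ^ n`. By Northcott's theorem the Mahler measures
of integer polynomials of degree `≤ n` take only finitely many values in `[1, 2]`, so for `c`
close enough to `1` it must be exactly `1`, and Kronecker's theorem makes `x` a root of unity.
-/

open Polynomial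

lemma AbsoluteValue.isNonarchimedean_of_forall_natCast_le_one {L : Type*} [Field L]
    (v : AbsoluteValue L ℝ) (h : ∀ n : ℕ, v n ≤ 1) : IsNonarchimedean v := by
  have : IsUltrametricDist (WithAbs v) :=
    IsUltrametricDist.isUltrametricDist_of_forall_norm_natCast_le_one fun n => h n
  intro x y
  exact IsUltrametricDist.norm_add_le_max (WithAbs.toAbs v x) (WithAbs.toAbs v y)

lemma IsNonarchimedean.apply_coeff_le_pow_of_roots_le {L : Type*} [Field L]
    {v : AbsoluteValue L ℝ} (hv : IsNonarchimedean v) {p : L[X]} (hp : p.Monic)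
    (hsplit : p.Splits) {c : ℝ} (hc : 1 ≤ c) (hroots : ∀ z ∈ p.roots, v z ≤ c) (k : ℕ) :
    v (p.coeff k) ≤ c ^ p.natDegree := by
  rcases lt_or_ge p.natDegree k with hk | hk
  · rw [coeff_eq_zero_of_natDegree_lt hk, map_zero]
    positivity
  have hcard : Multiset.card p.roots = p.natDegree := hsplit.natDegree_eq_card_roots.symm
  obtain ⟨t, ht_card, ht_sub, ht_le⟩ := hv.multiset_powerset_image_add p.roots k
  rw [coeff_eq_esymm_roots_of_splits hsplit hk, hp.leadingCoeff, one_mul, map_mul,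
    map_pow, v.map_neg, map_one, one_pow, one_mul, ← hcard]
  calc v (p.roots.esymm _) ≤ v t.prod := ht_le
    _ = (t.map v).prod := map_multiset_prod v t
    _ ≤ c ^ Multiset.card t :=
        Multiset.prod_map_le_pow_card (fun z _ => v.nonneg z) fun z hz => hroots z (ht_sub z hz)
    _ ≤ c ^ Multiset.card p.roots := pow_le_pow_right₀ hc (by omega)

lemma padicNorm_le_one_of_lt {ℓ : ℕ} [Fact ℓ.Prime] {x : ℚ} (h : padicNorm ℓ x < ℓ) :
    padicNorm ℓ x ≤ 1 := by
  rcases eq_or_ne x 0 with rfl | hx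
  · simp
  obtain ⟨z, hz⟩ := padicNorm.values_discrete (p := ℓ) hx
  have hℓ : (1 : ℚ) < ℓ := mod_cast (Fact.out : ℓ.Prime).one_lt
  rw [hz] at h ⊢
  have : -z < 1 := (zpow_lt_zpow_iff_right₀ hℓ).1 (by simpa using h)
  exact zpow_le_one_of_nonpos₀ hℓ.le (by omega)

lemma one_lt_padicNorm_of_dvd_den {ℓ : ℕ} [hℓ : Fact ℓ.Prime] {x : ℚ} (h : ℓ ∣ x.den) :
    1 < padicNorm ℓ x := by
  have hnum : padicNorm ℓ x.num = 1 := by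
    refine (padicNorm.int_eq_one_iff _).2 fun hdvd => hℓ.out.one_lt.ne' ?_
    exact Nat.eq_one_of_dvd_coprimes x.reduced (Int.natCast_dvd.1 hdvd) h
  have hden : padicNorm ℓ x.den < 1 := (padicNorm.nat_lt_one_iff _).2 h
  have hmul := padicNorm.mul (p := ℓ) x x.den
  rw [Rat.mul_den_eq_num, hnum] at hmul
  nlinarith [padicNorm.nonneg (p := ℓ) x, padicNorm.nonneg (p := ℓ) (x.den : ℚ)]

lemma Rat.den_eq_one_of_mul_prod_pow_eq_intCast {ι : Type*} [Fintype ι] {p : ι → ℕ}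
    (hp : ∀ i, (p i).Prime) {x : ℚ} {m : ℕ} {a : ℤ} (hx : x * (∏ i, (p i : ℚ)) ^ m = a)
    (hnorm : ∀ i, padicNorm (p i) x ≤ 1) : x.den = 1 := by
  set Q : ℕ := (∏ i, p i) ^ m
  have hQ : Q ≠ 0 := pow_ne_zero _ (Finset.prod_ne_zero_iff.2 fun i _ => (hp i).ne_zero)
  have hden : x.den ∣ Q := by
    have hxQ : x = a * (Q : ℚ)⁻¹ := by
      have hQ' : (Q : ℚ) ≠ 0 := Nat.cast_ne_zero.2 hQ
      rw [← hx]
      push_cast [Q] at hQ' ⊢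
      exact (mul_inv_cancel_right₀ hQ' x).symm
    have := Rat.mul_den_dvd (a : ℚ) (Q : ℚ)⁻¹
    rwa [← hxQ, Rat.den_intCast, one_mul, Rat.inv_natCast_den_of_pos (Nat.pos_of_ne_zero hQ)]
      at this
  rw [Nat.eq_one_iff_not_exists_prime_dvd]
  intro ℓ hℓ hdvd
  obtain ⟨i, -, hi⟩ := hℓ.prime.exists_mem_finset_dvd (hℓ.dvd_of_dvd_pow (hdvd.trans hden))
  obtain rfl := (Nat.prime_dvd_prime_iff_eq hℓ (hp i)).1 hi
  have : Fact (p i).Prime := ⟨hℓ⟩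
  exact absurd (hnorm i) (one_lt_padicNorm_of_dvd_den hdvd).not_ge

lemma padicNorm_coeff_le_one_of_roots_le {L : Type*} [Field L] [Algebra ℚ L] {ℓ : ℕ}
    [Fact ℓ.Prime] {v : AbsoluteValue L ℝ}
    (hv : ∀ r : ℚ, v (algebraMap ℚ L r) = ((padicNorm ℓ r : ℚ) : ℝ)) {g : ℚ[X]} (hg : g.Monic)
    (hsplit : (g.map (algebraMap ℚ L)).Splits) {c : ℝ} (hc : 1 ≤ c) (hcg : c ^ g.natDegree < ℓ)
    (hroots : ∀ y ∈ g.aroots L, v y ≤ c) (k : ℕ) : padicNorm ℓ (g.coeff k) ≤ 1 := by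
  have hna : IsNonarchimedean v := v.isNonarchimedean_of_forall_natCast_le_one fun n => by
    simpa [map_natCast] using (hv n).le.trans (mod_cast padicNorm.of_nat n)
  have hcoeff := hna.apply_coeff_le_pow_of_roots_le (hg.map _) hsplit hc hroots k
  rw [coeff_map, hv, natDegree_map] at hcoeff
  exact padicNorm_le_one_of_lt (mod_cast hcoeff.trans_lt hcg)

lemma exists_mul_pow_eq_intCast_of_mem_closure_inv {q : ℤ} (hq : q ≠ 0) {x : ℚ}
    (hx : x ∈ Subring.closure {(q : ℚ)⁻¹}) : ∃ m : ℕ, ∃ a : ℤ, x * q ^ m = a := by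
  have hq' : (q : ℚ) ≠ 0 := Int.cast_ne_zero.2 hq
  induction hx using Subring.closure_induction with
  | mem x hx =>
    exact ⟨1, 1, by rw [Set.mem_singleton_iff.1 hx, pow_one, inv_mul_cancel₀ hq', Int.cast_one]⟩
  | zero => exact ⟨0, 0, by simp⟩
  | one => exact ⟨0, 1, by simp⟩
  | add x y _ _ hx hy =>
    obtain ⟨m, a, ha⟩ := hx
    obtain ⟨l, b, hb⟩ := hy
    exact ⟨m + l, a * q ^ l + b * q ^ m, by
      push_cast
      linear_combination (q : ℚ) ^ l * ha + (q : ℚ) ^ m * hb⟩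
  | neg x _ hx =>
    obtain ⟨m, a, ha⟩ := hx
    exact ⟨m, -a, by push_cast; linear_combination -ha⟩
  | mul x y _ _ hx hy =>
    obtain ⟨m, a, ha⟩ := hx
    obtain ⟨l, b, hb⟩ := hy
    exact ⟨m + l, a * b, by push_cast; linear_combination (q : ℚ) ^ l * y * ha + (a : ℚ) * hb⟩

lemma isLocalization_closure_inv {q : ℤ} (hq : q ≠ 0) :
    IsLocalization (Submonoid.powers q) (Subring.closure {(q : ℚ)⁻¹}) where
  map_units := by
    rintro ⟨_, k, rfl⟩
    rw [map_pow]
    refine IsUnit.pow k (IsUnit.of_mul_eq_one ⟨(q : ℚ)⁻¹, Subring.subset_closure rfl⟩ ?_)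
    exact Subtype.ext (mul_inv_cancel₀ (Int.cast_ne_zero.2 hq))
  surj z := by
    obtain ⟨m, a, h⟩ := exists_mul_pow_eq_intCast_of_mem_closure_inv hq z.2
    exact ⟨(a, ⟨q ^ m, m, rfl⟩), Subtype.ext (by simpa using h)⟩
  exists_of_eq h := ⟨1, by simpa [Subtype.ext_iff] using h⟩

lemma exists_isIntegral_pow_smul_of_aeval_eq_zero {A : Type*} [CommRing A] [Algebra ℚ A]
    {q : ℤ} (hq : q ≠ 0) {f : ℚ[X]} (hf : f.Monic)
    (hcoeff : ∀ i, f.coeff i ∈ Subring.closure {(q : ℚ)⁻¹}) {x : A} (hx : aeval x f = 0) :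
    ∃ N : ℕ, IsIntegral ℤ ((q : ℚ) ^ N • x) := by
  set R := Subring.closure {(q : ℚ)⁻¹}
  have : IsLocalization (Submonoid.powers q) R := isLocalization_closure_inv hq
  have hcoeffs : (f.coeffs : Set ℚ) ⊆ R := fun a ha => by
    obtain ⟨i, -, rfl⟩ := mem_coeffs_iff.1 ha
    exact hcoeff i
  have hxR : IsIntegral R x := by
    refine ⟨f.toSubring R hcoeffs, (monic_toSubring _ _ _).2 hf, ?_⟩
    rw [← hx, aeval_def]
    conv_rhs => rw [← map_toSubring f R hcoeffs, eval₂_map]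
    rfl
  obtain ⟨⟨_, N, rfl⟩, hN⟩ := hxR.exists_multiple_integral_of_isLocalization (Submonoid.powers q)
  rw [Submonoid.smul_def, ← Int.cast_smul_eq_zsmul ℚ, Int.cast_pow] at hN
  exact ⟨N, hN⟩

lemma exists_minpoly_coeff_mul_pow_eq_intCast {L : Type*} [Field L] [Algebra ℚ L] {x : L}
    (hx : IsIntegral ℚ x) {q : ℚ} (hq : q ≠ 0) {N : ℕ} (hN : IsIntegral ℤ (q ^ N • x))
    (k : ℕ) : ∃ m : ℕ, ∃ a : ℤ, (minpoly ℚ x).coeff k * q ^ m = a := by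
  have hmin := IsIntegrallyClosed.minpoly_smul (pow_ne_zero N hq) hx
  rw [minpoly.isIntegrallyClosed_eq_field_fractions' ℚ hN] at hmin
  refine ⟨N * ((minpoly ℚ x).natDegree - k), (minpoly ℤ (q ^ N • x)).coeff k, ?_⟩
  rw [pow_mul, ← coeff_scaleRoots, ← hmin, coeff_map, eq_intCast]

lemma isIntegral_int_of_padicNorm_minpoly_coeff_le_one {L : Type*} [Field L] [Algebra ℚ L]
    {ι : Type*} [Fintype ι] {p : ι → ℕ} (hp : ∀ i, (p i).Prime) {x : L} (hx : IsIntegral ℚ x)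
    {N : ℕ} (hN : IsIntegral ℤ ((∏ i, (p i : ℚ)) ^ N • x))
    (hnorm : ∀ i k, padicNorm (p i) ((minpoly ℚ x).coeff k) ≤ 1) : IsIntegral ℤ x := by
  have hq : ∏ i, (p i : ℚ) ≠ 0 :=
    Finset.prod_ne_zero_iff.2 fun i _ => Nat.cast_ne_zero.2 (hp i).ne_zero
  have hint : ∀ k, (minpoly ℚ x).coeff k ∈ Set.range (algebraMap ℤ ℚ) := fun k => by
    obtain ⟨m, a, ha⟩ := exists_minpoly_coeff_mul_pow_eq_intCast hx hq hN k
    have hden := Rat.den_eq_one_of_mul_prod_pow_eq_intCast hp ha (hnorm · k)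
    exact ⟨_, (eq_intCast _ _).trans (Rat.coe_int_num_of_den_eq_one hden)⟩
  obtain ⟨G, hGx, -, hG⟩ :=
    lifts_and_natDegree_eq_and_monic ((lifts_iff_coeff_lifts _).2 hint) (minpoly.monic hx)
  refine ⟨G, hG, ?_⟩
  rw [← aeval_def, ← aeval_map_algebraMap ℚ, hGx, minpoly.aeval]

lemma mahlerMeasure_le_pow_of_norm_roots_le {p : ℂ[X]} (hp : p.Monic) {c : ℝ} (hc : 1 ≤ c)
    (h : ∀ z ∈ p.roots, ‖z‖ ≤ c) : p.mahlerMeasure ≤ c ^ p.natDegree := by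
  rw [mahlerMeasure_eq_leadingCoeff_mul_prod_roots, hp.leadingCoeff, norm_one, one_mul]
  calc (p.roots.map fun a => max 1 ‖a‖).prod ≤ (p.roots.map fun _ => c).prod :=
        Multiset.prod_map_le_prod_map₀ _ _ (fun _ _ => zero_le_one.trans (le_max_left _ _))
          fun z hz => max_le hc (h z hz)
    _ = c ^ Multiset.card p.roots := by rw [Multiset.map_const', Multiset.prod_replicate]
    _ ≤ c ^ p.natDegree := pow_le_pow_right₀ hc (card_roots' p)

lemma mahlerMeasure_minpoly_le_pow {L : Type*} [Field L] [IsAlgClosed L] [Algebra ℚ L]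
    (emb : L →+* ℂ) {x : L} (hx : IsIntegral ℤ x) {c : ℝ} (hc : 1 ≤ c)
    (h : ∀ y ∈ (minpoly ℚ x).aroots L, ‖emb y‖ ≤ c) :
    ((minpoly ℤ x).map (Int.castRingHom ℂ)).mahlerMeasure ≤ c ^ (minpoly ℚ x).natDegree := by
  have hmap : (minpoly ℤ x).map (Int.castRingHom ℂ) =
      ((minpoly ℚ x).map (algebraMap ℚ L)).map emb := by
    rw [minpoly.isIntegrallyClosed_eq_field_fractions' ℚ hx, map_map, map_map]
    exact congrArg (map · _) (RingHom.ext_int _ _)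
  have hroots : ((minpoly ℤ x).map (Int.castRingHom ℂ)).roots =
      ((minpoly ℚ x).aroots L).map emb := by
    rw [hmap, (IsAlgClosed.splits _).roots_map_of_injective emb.injective]
  have hdeg : ((minpoly ℤ x).map (Int.castRingHom ℂ)).natDegree = (minpoly ℚ x).natDegree := by
    rw [hmap, natDegree_map, natDegree_map]
  rw [← hdeg]
  refine mahlerMeasure_le_pow_of_norm_roots_le ((minpoly.monic hx).map _) hc fun z hz => ?_
  obtain ⟨y, hy, rfl⟩ := Multiset.mem_map.1 (hroots ▸ hz)
  exact h y hy

lemma exists_pow_eq_one_of_mahlerMeasure_minpoly_eq_one {L : Type*} [Field L] (emb : L →+* ℂ)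
    {x : L} (hx0 : x ≠ 0) (h : ((minpoly ℤ x).map (Int.castRingHom ℂ)).mahlerMeasure = 1) :
    ∃ k, 0 < k ∧ x ^ k = 1 := by
  have hmin : minpoly ℤ x ≠ 0 := by
    rintro hzero
    simp [hzero] at h
  have hroot : emb x ∈ (minpoly ℤ x).aroots ℂ := by
    refine mem_aroots.2 ⟨hmin, ?_⟩
    change aeval (emb.toIntAlgHom x) _ = 0
    rw [aeval_algHom_apply, minpoly.aeval, map_zero]
  obtain ⟨k, hk, hxk⟩ := pow_eq_one_of_mahlerMeasure_eq_one h ((map_ne_zero emb).2 hx0) hroot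
  exact ⟨k, hk, emb.injective (by rw [map_pow, hxk, map_one])⟩

lemma exists_mahlerMeasure_gap (n : ℕ) : ∃ m : ℝ, 1 < m ∧ ∀ p : ℤ[X], p.natDegree ≤ n →
    (p.map (Int.castRingHom ℂ)).mahlerMeasure < m →
      (p.map (Int.castRingHom ℂ)).mahlerMeasure ≤ 1 := by
  set M : ℤ[X] → ℝ := fun p => (p.map (Int.castRingHom ℂ)).mahlerMeasure
  have hfin : (M '' {p | p.natDegree ≤ n ∧ M p ≤ (2 : NNReal)}).Finite :=
    (finite_mahlerMeasure_le n 2).image M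
  set T := insert 2 (hfin.toFinset.filter (1 < ·))
  have hT : T.Nonempty := Finset.insert_nonempty _ _
  refine ⟨T.min' hT, (Finset.lt_min'_iff T hT).2 fun t ht => ?_, fun p hp hlt => ?_⟩
  · rcases Finset.mem_insert.1 ht with rfl | ht
    · exact one_lt_two
    · exact (Finset.mem_filter.1 ht).2
  · by_contra hgt
    push Not at hgt
    have h2 : M p ≤ 2 := hlt.le.trans (T.min'_le 2 (Finset.mem_insert_self _ _))
    have hmem : M p ∈ T := Finset.mem_insert_of_mem <| Finset.mem_filter.2
      ⟨hfin.mem_toFinset.2 ⟨p, ⟨hp, by exact_mod_cast h2⟩, rfl⟩, hgt⟩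
    exact (T.min'_le _ hmem).not_gt hlt

lemma exists_one_lt_pow_lt (n : ℕ) {b : ℝ} (hb : 1 < b) : ∃ c : ℝ, 1 < c ∧ c ^ n < b := by
  set c := b ^ ((n + 1 : ℕ) : ℝ)⁻¹
  have hc : 1 < c := Real.one_lt_rpow hb (by positivity)
  refine ⟨c, hc, ?_⟩
  calc c ^ n < c ^ (n + 1) := pow_lt_pow_right₀ hc n.lt_succ_self
    _ = b := Real.rpow_inv_natCast_pow (by positivity) n.succ_ne_zero

theorem valuation_gap_general (r : ℕ) (p : Fin r → ℕ)
    (hp : ∀ i, (p i).Prime)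
    (v : Fin r → AbsoluteValue (AlgebraicClosure ℚ) ℝ)
    (hv : ∀ i, ∀ x : ℚ,
      v i (algebraMap ℚ (AlgebraicClosure ℚ) x) = ((padicNorm (p i) x : ℚ) : ℝ))
    (emb : AlgebraicClosure ℚ →+* ℂ)
    (n : ℕ) :
    ∃ c : ℝ, 1 < c ∧
      ∀ x : AlgebraicClosure ℚ, x ≠ 0 →
        (∃ f : Polynomial ℚ, f.Monic ∧
          (∀ i : ℕ, f.coeff i ∈ Subring.closure {((∏ i : Fin r, (p i : ℚ)))⁻¹}) ∧
          Polynomial.aeval x f = 0) →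
        (minpoly ℚ x).natDegree ≤ n →
        (∃ m : ℕ, 0 < m ∧ x ^ m = 1) ∨
          (∃ y : AlgebraicClosure ℚ, Polynomial.aeval y (minpoly ℚ x) = 0 ∧
            (c ≤ ‖emb y‖ ∨ ∃ i : Fin r, c ≤ v i y)) := by
  obtain ⟨m, hm, hgap⟩ := exists_mahlerMeasure_gap n
  obtain ⟨c, hc, hcn⟩ := exists_one_lt_pow_lt n (lt_min hm one_lt_two)
  refine ⟨c, hc, fun x hx0 ⟨f, hf, hfR, hfx⟩ hdeg => or_iff_not_imp_right.2 fun hbig => ?_⟩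
  push Not at hbig
  have hsmall : ∀ y ∈ (minpoly ℚ x).aroots (AlgebraicClosure ℚ), ‖emb y‖ < c ∧ ∀ i, v i y < c :=
    fun y hy => hbig y (mem_aroots.1 hy).2
  have hxQ : IsIntegral ℚ x := ((AlgebraicClosure.isAlgebraic ℚ).isAlgebraic x).isIntegral
  have hcg : c ^ (minpoly ℚ x).natDegree < min m 2 := (pow_le_pow_right₀ hc.le hdeg).trans_lt hcn
  have hq : (∏ i, (p i : ℤ)) ≠ 0 :=
    Finset.prod_ne_zero_iff.2 fun i _ => Int.natCast_ne_zero.2 (hp i).ne_zero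
  obtain ⟨N, hN⟩ := exists_isIntegral_pow_smul_of_aeval_eq_zero hq hf (by simpa using hfR) hfx
  have hxZ : IsIntegral ℤ x := by
    refine isIntegral_int_of_padicNorm_minpoly_coeff_le_one hp hxQ (by simpa using hN) fun i k => ?_
    have : Fact (p i).Prime := ⟨hp i⟩
    refine padicNorm_coeff_le_one_of_roots_le (hv i) (minpoly.monic hxQ) (IsAlgClosed.splits _)
      hc.le ?_ (fun y hy => ((hsmall y hy).2 i).le) k
    exact (hcg.trans_le (min_le_right _ _)).trans_le (mod_cast (hp i).two_le)
  have hdegZ : (minpoly ℤ x).natDegree = (minpoly ℚ x).natDegree := by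
    rw [minpoly.isIntegrallyClosed_eq_field_fractions' ℚ hxZ, (minpoly.monic hxZ).natDegree_map]
  have hM : ((minpoly ℤ x).map (Int.castRingHom ℂ)).mahlerMeasure < m :=
    (mahlerMeasure_minpoly_le_pow emb hxZ hc.le fun y hy => (hsmall y hy).1.le).trans_lt
      (hcg.trans_le (min_le_left _ _))
  exact exists_pow_eq_one_of_mahlerMeasure_minpoly_eq_one emb hx0 <|
    le_antisymm (hgap _ (hdegZ ▸ hdeg) hM) (one_le_mahlerMeasure_of_ne_zero (minpoly.ne_zero hxZ))

/-- **Height gap for `S`-integers.** Let `p_1 < … < p_r` be primes, `q = p_1⋯p_r`,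
`R = ℤ[1/q]`. Let `|·|_i` (for `1 ≤ i ≤ r`) be absolute values on `ℚ̄` extending the
`p_i`-adic absolute value of `ℚ`, and `|·|_0` the restriction of the complex absolute
value along a fixed embedding `ℚ̄ → ℂ`. Then for every `n ≥ 1` there is `c > 1` such
that every nonzero `x ∈ ℚ̄` which is integral over `R` and of degree at most `n` over
`ℚ` is either a root of unity, or some Galois conjugate `y` of `x` satisfies
`|y|_i ≥ c` for some `0 ≤ i ≤ r`. -/
theorem valuation_gap (r : ℕ) (p : Fin r → ℕ)
    (hp : ∀ i, (p i).Prime) (hmono : StrictMono p)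
    (v : Fin r → AbsoluteValue (AlgebraicClosure ℚ) ℝ)
    (hv : ∀ i, ∀ x : ℚ,
      v i (algebraMap ℚ (AlgebraicClosure ℚ) x) = ((padicNorm (p i) x : ℚ) : ℝ))
    (emb : AlgebraicClosure ℚ →+* ℂ)
    (n : ℕ) (hn : 1 ≤ n) :
    ∃ c : ℝ, 1 < c ∧
      ∀ x : AlgebraicClosure ℚ, x ≠ 0 →
        (∃ f : Polynomial ℚ, f.Monic ∧
          (∀ i : ℕ, f.coeff i ∈ Subring.closure {((∏ i : Fin r, (p i : ℚ)))⁻¹}) ∧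
          Polynomial.aeval x f = 0) →
        (minpoly ℚ x).natDegree ≤ n →
        (∃ m : ℕ, 0 < m ∧ x ^ m = 1) ∨
          (∃ y : AlgebraicClosure ℚ, Polynomial.aeval y (minpoly ℚ x) = 0 ∧
            (c ≤ ‖emb y‖ ∨ ∃ i : Fin r, c ≤ v i y)) :=
  valuation_gap_general r p hp v hv emb n
end

section
/- Let G be a finite group with a maximal abelian subgroup T, and let μ be an automorphism of G with μ(T) = T; set n := ord(μ). If t ∈ T satisfies μ(t) = t and C_G(t^n) = T, then T_μ = {g ∈ G : g·t·μ(g)⁻¹ = t}, where T_μ := {s ∈ T : μ(s) = s}. -/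
/-- **Twisted centralizer lemma.** Let `G` be a finite group with a maximal abelian
subgroup `T`, and `μ ∈ Aut(G)` with `μ(T) = T` of order `n`. If `t ∈ T` is fixed by
`μ` and `C_G(t^n) = T`, then `T_μ = {g ∈ G : g·t·μ(g)⁻¹ = t}`. -/
theorem twisted_centralizer {G : Type*} [Group G] [Finite G] (T : Subgroup G)
    (hcomm : ∀ a ∈ T, ∀ b ∈ T, a * b = b * a)
    (hmax : ∀ T' : Subgroup G, (∀ a ∈ T', ∀ b ∈ T', a * b = b * a) → T ≤ T' → T' = T)
    (μ : MulAut G) (hμT : ∀ g : G, g ∈ T ↔ μ g ∈ T)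
    (n : ℕ) (hn : n = orderOf μ)
    (t : G) (ht : t ∈ T) (htfix : μ t = t)
    (hcent : Subgroup.centralizer {t ^ n} = T) :
    {g : G | g ∈ T ∧ μ g = g} = {g : G | g * t * (μ g)⁻¹ = t} := by
  ext g
  simp only [Set.mem_setOf_eq]
  constructor
  · rintro ⟨hg, hfix⟩
    rw [hfix, hcomm g hg t ht, mul_inv_cancel_right]
  · intro hg
    have hgt : g * t = t * μ g := mul_inv_eq_iff_eq_mul.mp hg
    have hμg : μ g = t⁻¹ * g * t := by
      rw [mul_assoc, hgt, ← mul_assoc, inv_mul_cancel, one_mul]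
    have htpow : ∀ k : ℕ, μ (t ^ k) = t ^ k := fun k => by
      rw [map_pow, htfix]
    have key : ∀ k : ℕ, (μ ^ k) g = (t ^ k)⁻¹ * g * t ^ k := by
      intro k
      induction k with
      | zero => simp
      | succ k ih =>
        have : (μ ^ (k + 1)) g = μ ((μ ^ k) g) := by
          rw [pow_succ', MulAut.mul_apply]
        rw [this, ih, map_mul, map_mul, map_inv, htpow, hμg, pow_succ]
        group
    have hgn : g = (t ^ n)⁻¹ * g * t ^ n := by
      have := key n
      rw [hn] at this ⊢
      rwa [pow_orderOf_eq_one, MulAut.one_apply] at this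
    have hgT : g ∈ T := by
      rw [← hcent]
      intro x hx
      rw [Set.mem_singleton_iff] at hx
      subst hx
      conv_lhs => rw [hgn]
      rw [← mul_assoc, ← mul_assoc, mul_inv_cancel, one_mul]
    have hcommgt : g * t = t * g := hcomm g hgT t ht
    have hfix : μ g = g := by
      rw [hμg, mul_assoc, hcommgt, ← mul_assoc, inv_mul_cancel, one_mul]
    exact ⟨hgT, hfix⟩
end

section
/- Let G be a finite group with a maximal abelian subgroup T, and let μ be an automorphism of G with μ(T) = T; set n := ord(μ), and let c be the number of elements of T whose order divides n. If |T_{μ,n}| > (1/2)·|T_μ|, then the set L := {g ∈ G : ∃ s ∈ T_{μ,n} such that g·s·μ(g⁻¹) ∈ T_{μ,n}} is a subgroup of G containing T_μ, and the index [L : T_μ] is at most c·[N_G(T) : T]. -/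
/-!
Write `g • s := g s μ(g)⁻¹` for μ-twisted conjugation and `ℓ(g) := g⁻¹ μ(g)` for Lang's map,
so that `g • s = g (s ℓ(g)⁻¹) g⁻¹`. If `s` and `g • s` are both μ-fixed, then
`(g • s)^k = g s^k (μ^k g)⁻¹`, hence `(g • s)^n = g s^n g⁻¹` because `μ^n = 1`. When both lie in
`T_{μ,n}`, comparing the centralizers of these `n`-th powers gives `g ∈ N_G(T)`; then `ℓ(g) ∈ T`,
`ℓ(g)` is μ-fixed because `T` is abelian, and `μ^k g = g ℓ(g)^k` forces `ℓ(g)^n = 1`. Conversely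
every such `g` maps all of `T_{μ,n}` into itself, so once `T_{μ,n}` is nonempty, `L` is closed
under products. Finally `g ↦ (g T, ℓ(g))` is injective on `L / T_μ`, because for `x ∈ T` we have
`ℓ(g x) = ℓ(g)` iff `μ x = x`.
-/

namespace MulAut

variable {G : Type*} [Group G] (μ : MulAut G)

def twistConj (g s : G) : G := g * s * μ g⁻¹

def lang (g : G) : G := g⁻¹ * μ g

@[simp] lemma twistConj_one (s : G) : μ.twistConj 1 s = s := by
  simp [twistConj]

lemma twistConj_mul (g h s : G) : μ.twistConj (g * h) s = μ.twistConj g (μ.twistConj h s) := by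
  simp only [twistConj, mul_inv_rev, map_mul]
  group

@[simp] lemma twistConj_inv_twistConj (g s : G) : μ.twistConj g⁻¹ (μ.twistConj g s) = s := by
  simp only [twistConj, map_inv, inv_inv]
  group

lemma twistConj_eq_conj (g s : G) : μ.twistConj g s = g * (s * (μ.lang g)⁻¹) * g⁻¹ := by
  simp only [twistConj, lang, map_inv]
  group

lemma apply_eq_mul_lang (g : G) : μ g = g * μ.lang g := by
  simp [lang]

lemma lang_mul (g x : G) : μ.lang (g * x) = x⁻¹ * μ.lang g * μ x := by
  simp only [lang, map_mul]
  group

lemma pow_succ_apply (k : ℕ) (g : G) : (μ ^ (k + 1)) g = μ ((μ ^ k) g) := by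
  rw [pow_succ']
  rfl

lemma pow_apply_eq_self {x : G} (hx : μ x = x) (k : ℕ) : (μ ^ k) x = x := by
  induction k with
  | zero => rfl
  | succ k ih => rw [pow_succ_apply, ih, hx]

lemma twistConj_pow {g s : G} (hs : μ s = s) (ht : μ (μ.twistConj g s) = μ.twistConj g s)
    (k : ℕ) : μ.twistConj g s ^ k = g * s ^ k * ((μ ^ k) g)⁻¹ := by
  induction k with
  | zero => simp
  | succ k ih =>
    have hshift : μ.twistConj g s = (μ ^ k) g * s * ((μ ^ (k + 1)) g)⁻¹ := by
      conv_lhs => rw [← μ.pow_apply_eq_self ht k]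
      rw [twistConj, map_mul, map_mul, μ.pow_apply_eq_self hs, map_inv, map_inv,
        ← MulAut.mul_apply, ← pow_succ]
    rw [pow_succ, ih, hshift]
    group

lemma pow_apply_eq_mul_lang_pow {g : G} (h : μ (μ.lang g) = μ.lang g) (k : ℕ) :
    (μ ^ k) g = g * μ.lang g ^ k := by
  induction k with
  | zero => simp
  | succ k ih =>
    rw [pow_succ_apply, ih, map_mul, map_pow, h, apply_eq_mul_lang, pow_succ', mul_assoc]

lemma lang_pow_eq_one {n : ℕ} (hμn : μ ^ n = 1) {g : G} (h : μ (μ.lang g) = μ.lang g) :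
    μ.lang g ^ n = 1 := by
  have := μ.pow_apply_eq_mul_lang_pow h n
  rwa [hμn, MulAut.one_apply, left_eq_mul] at this

end MulAut

namespace Subgroup

variable {G : Type*} [Group G]

lemma centralizer_conj_eq_iff_mem_normalizer {T : Subgroup G} {a : G}
    (ha : centralizer {a} = T) (g : G) :
    centralizer {g * a * g⁻¹} = T ↔ g ∈ normalizer (T : Set G) := by
  have hconj (x : G) : x ∈ centralizer {g * a * g⁻¹} ↔ g⁻¹ * x * g ∈ T := by
    rw [← ha, mem_centralizer_singleton_iff, mem_centralizer_singleton_iff]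
    change Commute x _ ↔ Commute _ a
    rw [← Commute.conj_iff g⁻¹, inv_inv, show g⁻¹ * (g * a * g⁻¹) * g = a by group]
  rw [mem_normalizer_iff'', SetLike.ext_iff]
  exact forall_congr' fun x => by rw [hconj]; exact Iff.comm

variable {T : Subgroup G} {μ : MulAut G} {n : ℕ}

variable (T μ n) in
/-- The set `T_{μ,n}`. -/
def regularFixedPoints : Set G := {t | t ∈ T ∧ μ t = t ∧ centralizer {t ^ n} = T}

variable (T μ) in
def fixedSubgroup : Subgroup G where
  carrier := {t | t ∈ T ∧ μ t = t}
  mul_mem' ha hb := ⟨T.mul_mem ha.1 hb.1, by rw [map_mul, ha.2, hb.2]⟩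
  one_mem' := ⟨T.one_mem, map_one μ⟩
  inv_mem' ha := ⟨T.inv_mem ha.1, by rw [map_inv, ha.2]⟩

lemma mem_normalizer_of_twistConj_mem (hμn : μ ^ n = 1) {g s : G}
    (hs : s ∈ T.regularFixedPoints μ n) (ht : μ.twistConj g s ∈ T.regularFixedPoints μ n) :
    g ∈ normalizer (T : Set G) := by
  have hpow : μ.twistConj g s ^ n = g * s ^ n * g⁻¹ := by
    rw [μ.twistConj_pow hs.2.1 ht.2.1, hμn, MulAut.one_apply]
  rw [← centralizer_conj_eq_iff_mem_normalizer hs.2.2, ← hpow]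
  exact ht.2.2

lemma lang_mem_of_twistConj_mem {g s : G} (hg : g ∈ normalizer (T : Set G)) (hs : s ∈ T)
    (ht : μ.twistConj g s ∈ T) : μ.lang g ∈ T := by
  rw [μ.twistConj_eq_conj] at ht
  simpa using T.mul_mem (T.inv_mem ((mem_normalizer_iff.mp hg _).mpr ht)) hs

lemma lang_fixed_of_twistConj_fixed (hcomm : ∀ a ∈ T, ∀ b ∈ T, a * b = b * a) {g s : G}
    (hs : s ∈ T) (hsμ : μ s = s) (hℓ : μ.lang g ∈ T)
    (ht : μ (μ.twistConj g s) = μ.twistConj g s) : μ (μ.lang g) = μ.lang g := by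
  simp only [MulAut.twistConj, map_mul, map_inv, hsμ] at ht
  calc μ (μ.lang g) = (μ g)⁻¹ * ((μ (μ g))⁻¹)⁻¹ := by simp [MulAut.lang]
    _ = s⁻¹ * μ.lang g * s := by rw [eq_inv_mul_of_mul_eq ht, MulAut.lang]; group
    _ = μ.lang g := by rw [mul_assoc, hcomm _ hℓ _ hs, inv_mul_cancel_left]

lemma twistConj_mem_regularFixedPoints_iff (hcomm : ∀ a ∈ T, ∀ b ∈ T, a * b = b * a)
    (hμn : μ ^ n = 1) {g s : G} (hs : s ∈ T.regularFixedPoints μ n) :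
    μ.twistConj g s ∈ T.regularFixedPoints μ n ↔ g ∈ normalizer (T : Set G) ∧
      μ.lang g ∈ T ∧ μ (μ.lang g) = μ.lang g ∧ μ.lang g ^ n = 1 := by
  constructor
  · intro ht
    have hg := mem_normalizer_of_twistConj_mem hμn hs ht
    have hℓ := lang_mem_of_twistConj_mem hg hs.1 ht.1
    have hℓμ := lang_fixed_of_twistConj_fixed hcomm hs.1 hs.2.1 hℓ ht.2.1
    exact ⟨hg, hℓ, hℓμ, μ.lang_pow_eq_one hμn hℓμ⟩
  · rintro ⟨hg, hℓ, hℓμ, hℓn⟩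
    have hsℓ : Commute s (μ.lang g)⁻¹ := hcomm _ hs.1 _ (T.inv_mem hℓ)
    rw [μ.twistConj_eq_conj]
    refine ⟨(mem_normalizer_iff.mp hg _).mp (T.mul_mem hs.1 (T.inv_mem hℓ)), ?_, ?_⟩
    · rw [map_mul, map_mul, map_mul, map_inv, map_inv, hs.2.1, hℓμ, μ.apply_eq_mul_lang]
      conv_lhs => rw [hsℓ.eq]
      group
    · rw [conj_pow, hsℓ.mul_pow, inv_pow, hℓn, inv_one, mul_one,
        centralizer_conj_eq_iff_mem_normalizer hs.2.2]
      exact hg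

variable (T μ n) in
def twistedNormalizer (hcomm : ∀ a ∈ T, ∀ b ∈ T, a * b = b * a) (hμn : μ ^ n = 1)
    (hX : (T.regularFixedPoints μ n).Nonempty) : Subgroup G where
  carrier := {g | ∃ s ∈ T.regularFixedPoints μ n, μ.twistConj g s ∈ T.regularFixedPoints μ n}
  one_mem' := hX.elim fun s hs => ⟨s, hs, by rwa [μ.twistConj_one]⟩
  mul_mem' := by
    rintro a b ⟨sa, hsa, hta⟩ ⟨sb, hsb, htb⟩
    refine ⟨sb, hsb, ?_⟩
    rw [μ.twistConj_mul]
    exact (twistConj_mem_regularFixedPoints_iff hcomm hμn htb).mpr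
      ((twistConj_mem_regularFixedPoints_iff hcomm hμn hsa).mp hta)
  inv_mem' := by
    rintro g ⟨s, hs, ht⟩
    exact ⟨_, ht, by rwa [μ.twistConj_inv_twistConj]⟩

lemma fixedSubgroup_le_twistedNormalizer (hcomm : ∀ a ∈ T, ∀ b ∈ T, a * b = b * a)
    (hμn : μ ^ n = 1) (hX : (T.regularFixedPoints μ n).Nonempty) :
    T.fixedSubgroup μ ≤ T.twistedNormalizer μ n hcomm hμn hX := by
  rintro x ⟨hxT, hxμ⟩
  obtain ⟨s, hs⟩ := hX
  refine ⟨s, hs, ?_⟩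
  rwa [MulAut.twistConj, map_inv, hxμ, hcomm x hxT s hs.1, mul_inv_cancel_right]

lemma lang_mul_eq_lang_iff (hcomm : ∀ a ∈ T, ∀ b ∈ T, a * b = b * a) {g x : G}
    (hℓ : μ.lang g ∈ T) (hx : x ∈ T) : μ.lang (g * x) = μ.lang g ↔ μ x = x := by
  rw [μ.lang_mul, hcomm _ (T.inv_mem hx) _ hℓ, mul_assoc, mul_eq_left, inv_mul_eq_one, eq_comm]

lemma relIndex_fixedSubgroup_le [Finite G] (hcomm : ∀ a ∈ T, ∀ b ∈ T, a * b = b * a)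
    {L : Subgroup G}
    (hL : ∀ g ∈ L, g ∈ normalizer (T : Set G) ∧ μ.lang g ∈ T ∧ μ.lang g ^ n = 1) :
    (T.fixedSubgroup μ).relIndex L ≤
      Nat.card {t : G | t ∈ T ∧ t ^ n = 1} * T.relIndex (normalizer (T : Set G)) := by
  set N := normalizer (T : Set G)
  let f : L → (N ⧸ T.subgroupOf N) × {t : G | t ∈ T ∧ t ^ n = 1} :=
    fun g => ((⟨g, (hL g g.2).1⟩ : N), ⟨μ.lang g, (hL g g.2).2⟩)
  have hf (a b : L) : f a = f b ↔ a⁻¹ * b ∈ (T.fixedSubgroup μ).subgroupOf L := by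
    simp only [f, Prod.mk.injEq, QuotientGroup.eq, Subtype.mk.injEq, mem_subgroupOf, coe_mul,
      coe_inv]
    refine and_congr_right fun hx => ?_
    rw [← lang_mul_eq_lang_iff hcomm (hL a a.2).2.1 hx, mul_inv_cancel_left, eq_comm]
  let F : L ⧸ (T.fixedSubgroup μ).subgroupOf L → (N ⧸ T.subgroupOf N) × _ :=
    Quotient.lift f fun a b h => (hf a b).mpr (QuotientGroup.leftRel_apply.mp h)
  have hF : Function.Injective F := fun p q => Quotient.inductionOn₂ p q fun a b h =>
    Quotient.sound (QuotientGroup.leftRel_apply.mpr ((hf a b).mp h))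
  calc (T.fixedSubgroup μ).relIndex L = Nat.card (L ⧸ (T.fixedSubgroup μ).subgroupOf L) := rfl
    _ ≤ Nat.card ((N ⧸ T.subgroupOf N) × {t : G | t ∈ T ∧ t ^ n = 1}) :=
      Nat.card_le_card_of_injective F hF
    _ = _ := by rw [Nat.card_prod, mul_comm]; rfl

end Subgroup

open Subgroup

theorem twisted_normalizer_general {G : Type*} [Group G] [Finite G] (T : Subgroup G)
    (hcomm : ∀ a ∈ T, ∀ b ∈ T, a * b = b * a)
    (μ : MulAut G)
    (n : ℕ) (hn : n = orderOf μ)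
    (c : ℕ) (hc : c = Nat.card {t : G | t ∈ T ∧ t ^ n = 1})
    (hbig : (1 / 2 : ℝ) * (Nat.card {t : G | t ∈ T ∧ μ t = t} : ℝ) <
      (Nat.card {t : G | t ∈ T ∧ μ t = t ∧ Subgroup.centralizer {t ^ n} = T} : ℝ)) :
    ∃ L : Subgroup G,
      (L : Set G) = {g : G | ∃ s : G,
          (s ∈ T ∧ μ s = s ∧ Subgroup.centralizer {s ^ n} = T) ∧
          (g * s * μ g⁻¹ ∈ T ∧ μ (g * s * μ g⁻¹) = g * s * μ g⁻¹ ∧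
            Subgroup.centralizer {(g * s * μ g⁻¹) ^ n} = T)} ∧
      {g : G | g ∈ T ∧ μ g = g} ⊆ (L : Set G) ∧
      Nat.card L ≤ c * T.relIndex (Subgroup.normalizer (T : Set G)) *
        Nat.card {g : G | g ∈ T ∧ μ g = g} := by
  have hμn : μ ^ n = 1 := hn ▸ pow_orderOf_eq_one μ
  have hX : (T.regularFixedPoints μ n).Nonempty := by
    have : 0 < Nat.card (T.regularFixedPoints μ n) := by
      exact_mod_cast (by positivity : (0 : ℝ) ≤ 1 / 2 * _).trans_lt hbig
    exact Set.nonempty_coe_sort.mp (Nat.card_pos_iff.mp this).1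
  set L := T.twistedNormalizer μ n hcomm hμn hX
  have hTμL : T.fixedSubgroup μ ≤ L := fixedSubgroup_le_twistedNormalizer hcomm hμn hX
  have hL (g : G) (hg : g ∈ L) :
      g ∈ normalizer (T : Set G) ∧ μ.lang g ∈ T ∧ μ.lang g ^ n = 1 := by
    obtain ⟨s, hs, ht⟩ := hg
    obtain ⟨hgN, hℓ, -, hℓn⟩ := (twistConj_mem_regularFixedPoints_iff hcomm hμn hs).mp ht
    exact ⟨hgN, hℓ, hℓn⟩
  refine ⟨L, rfl, hTμL, ?_⟩
  calc Nat.card L = (T.fixedSubgroup μ).relIndex L * Nat.card (T.fixedSubgroup μ) := by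
        rw [← relIndex_bot_left, ← relIndex_mul_relIndex _ _ _ bot_le hTμL, relIndex_bot_left,
          mul_comm]
    _ ≤ c * T.relIndex (normalizer (T : Set G)) * Nat.card (T.fixedSubgroup μ) := by
        rw [hc]
        gcongr
        exact relIndex_fixedSubgroup_le hcomm hL

/-- **Twisted normalizer lemma.** Let `G` be a finite group with a maximal abelian
subgroup `T`, `μ ∈ Aut(G)` with `μ(T) = T` of order `n`, and let `c` be the number of
elements of `T` of order dividing `n`. If `|T_{μ,n}| > (1/2)|T_μ|`, then
`L = {g ∈ G : ∃ s ∈ T_{μ,n}, g·s·μ(g⁻¹) ∈ T_{μ,n}}` is a subgroup of `G` containing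
`T_μ` with index `[L : T_μ] ≤ c·[N_G(T) : T]`. -/
theorem twisted_normalizer {G : Type*} [Group G] [Finite G] (T : Subgroup G)
    (hcomm : ∀ a ∈ T, ∀ b ∈ T, a * b = b * a)
    (hmax : ∀ T' : Subgroup G, (∀ a ∈ T', ∀ b ∈ T', a * b = b * a) → T ≤ T' → T' = T)
    (μ : MulAut G) (hμT : ∀ g : G, g ∈ T ↔ μ g ∈ T)
    (n : ℕ) (hn : n = orderOf μ)
    (c : ℕ) (hc : c = Nat.card {t : G | t ∈ T ∧ t ^ n = 1})
    (hbig : (1 / 2 : ℝ) * (Nat.card {t : G | t ∈ T ∧ μ t = t} : ℝ) <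
      (Nat.card {t : G | t ∈ T ∧ μ t = t ∧ Subgroup.centralizer {t ^ n} = T} : ℝ)) :
    ∃ L : Subgroup G,
      (L : Set G) = {g : G | ∃ s : G,
          (s ∈ T ∧ μ s = s ∧ Subgroup.centralizer {s ^ n} = T) ∧
          (g * s * μ g⁻¹ ∈ T ∧ μ (g * s * μ g⁻¹) = g * s * μ g⁻¹ ∧
            Subgroup.centralizer {(g * s * μ g⁻¹) ^ n} = T)} ∧
      {g : G | g ∈ T ∧ μ g = g} ⊆ (L : Set G) ∧
      Nat.card L ≤ c * T.relIndex (Subgroup.normalizer (T : Set G)) *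
        Nat.card {g : G | g ∈ T ∧ μ g = g} :=
  twisted_normalizer_general T hcomm μ n hn c hc hbig
end

section
/- Let m be a prime number. Let H be a finite group containing a normal subgroup G, fix h ∈ H, and let μ ∈ Aut(G) be the automorphism of G induced by conjugation by h; set n := ord(μ). Let T be a maximal abelian subgroup of G with μ(T) = T, and let c be the number of elements of T whose order divides n. Assume: (1) m divides |T_μ|; (2) |T_{μ,n}| ≥ (3/4)·|T_μ|. Then |{x^m : x ∈ Gh}| ≤ (1 − 1/(4·c·[N_G(T):T]))·|G|, where Gh denotes the coset {gh : g ∈ G}. -/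
/-!
Conjugation by `g ∈ G` maps `x * h` to `(g * x * (μ g)⁻¹) * h`, so the coset `G h` is a union of
orbits of the twisted action `x ↦ g * x * (μ g)⁻¹` of `G` on itself. For `y ∈ T_μ`, `y` commutes
with `h` and `((g * y * (μ g)⁻¹) * h) ^ m = g * y ^ m * h ^ m * g⁻¹`, which does not change when `y`
is multiplied by an element of order `m` of `T_μ` (Cauchy). So the `m`-th power map is at least
two-to-one on the union `B` of the orbits of `T_μ`, and at most `|G| - |B| / 2` elements of `G h`
are `m`-th powers.

To bound `|B|` from below, let `t, s ∈ T_{μ,n}` with `s = u⁻¹ * t * μ u`. Since `μ ^ n = 1`,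
`s ^ n = u⁻¹ * t ^ n * u`, so `u` normalises `T = C_G(t ^ n) = C_G(s ^ n)`. Inside one coset of `T`,
`s` determines `u` up to `T_μ`, and `s` is determined up to an element of `T` of order dividing
`n`. Hence the map `(g, t) ↦ g * t * (μ g)⁻¹` on `G × T_{μ,n}` has fibres of size at most
`|T_μ| c [N_G(T) : T]`, which together with `|T_{μ,n}| ≥ 3 |T_μ| / 4` gives
`|B| ≥ 3 |G| / (4 c [N_G(T) : T])`.
-/

open Finset

theorem Finset.two_mul_card_image_add_card_le {α β : Type*} [DecidableEq α] [DecidableEq β]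
    {s t : Finset α} (f : α → β) (hst : s ⊆ t)
    (hs : ∀ x ∈ s, ∃ y ∈ s, y ≠ x ∧ f y = f x) :
    2 * #(t.image f) + #s ≤ 2 * #t := by
  have hpairs : 2 * #(s.image f) ≤ #s := by
    refine mul_card_image_le_card s 2 fun b hb => ?_
    obtain ⟨x, hx, rfl⟩ := mem_image.mp hb
    obtain ⟨y, hy, hyx, hfy⟩ := hs x hx
    exact one_lt_card.mpr ⟨y, mem_filter.mpr ⟨hy, hfy⟩, x, mem_filter.mpr ⟨hx, rfl⟩, hyx⟩
  have hsplit : #(t.image f) ≤ #(s.image f) + #(t \ s) := by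
    calc #(t.image f) = #((s ∪ t \ s).image f) := by rw [union_sdiff_of_subset hst]
      _ ≤ #(s.image f) + #((t \ s).image f) := by rw [image_union]; exact card_union_le _ _
      _ ≤ #(s.image f) + #(t \ s) := by gcongr; exact card_image_le
  have := card_sdiff_add_card_eq_card hst
  omega

theorem Finset.card_image_mk_le_relIndex {G : Type*} [Group G] [Finite G] {T N : Subgroup G}
    [DecidableEq (G ⧸ T)] (s : Finset G) (hs : ∀ x ∈ s, x ∈ N) :
    #(s.image (QuotientGroup.mk : G → G ⧸ T)) ≤ T.relIndex N := by
  have : Fintype (N ⧸ T.subgroupOf N) := Fintype.ofFinite _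
  let incl : N ⧸ T.subgroupOf N → G ⧸ T := Quotient.map' N.subtype fun a b hab => by
    rw [QuotientGroup.leftRel_apply, Subgroup.mem_subgroupOf] at hab
    rwa [QuotientGroup.leftRel_apply]
  calc #(s.image (QuotientGroup.mk : G → G ⧸ T)) ≤ #(univ : Finset (N ⧸ T.subgroupOf N)) := by
        refine card_le_card_of_surjOn incl fun q hq => ?_
        obtain ⟨x, hx, rfl⟩ := mem_image.mp hq
        exact ⟨QuotientGroup.mk ⟨x, hs x hx⟩, mem_coe.mpr (mem_univ _), rfl⟩
    _ = T.relIndex N := by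
        rw [card_univ, ← Nat.card_eq_fintype_card, Subgroup.relIndex, Subgroup.index_eq_card]

theorem Subgroup.mem_normalizer_of_centralizer_eq {G : Type*} [Group G] {T : Subgroup G}
    {a u : G} (ha : centralizer {a} = T) (hu : centralizer {u⁻¹ * a * u} = T) :
    u ∈ normalizer (T : Set G) := by
  rw [mem_normalizer_iff]
  intro x
  rw [← hu, mem_centralizer_singleton_iff, hu, ← ha, mem_centralizer_singleton_iff]
  constructor <;> intro e
  · calc u * x * u⁻¹ * a = u * (x * (u⁻¹ * a * u)) * u⁻¹ := by group
      _ = a * (u * x * u⁻¹) := by rw [e]; group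
  · calc x * (u⁻¹ * a * u) = u⁻¹ * (u * x * u⁻¹ * a) * u := by group
      _ = u⁻¹ * a * u * x := by rw [e]; group

section TwistedConjugation

variable {G : Type*} [Group G] {μ : MulAut G}

theorem pow_inv_mul_mul_apply {t u : G} (ht : μ t = t)
    (hs : μ (u⁻¹ * t * μ u) = u⁻¹ * t * μ u) (k : ℕ) :
    (u⁻¹ * t * μ u) ^ k = u⁻¹ * t ^ k * (μ ^ k) u := by
  induction k with
  | zero => simp
  | succ k ih =>
    calc (u⁻¹ * t * μ u) ^ (k + 1) = u⁻¹ * t * μ u * μ ((u⁻¹ * t * μ u) ^ k) := by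
          rw [map_pow, hs, pow_succ']
      _ = u⁻¹ * t ^ (k + 1) * (μ ^ (k + 1)) u := by
          rw [ih, map_mul, map_mul, map_inv, map_pow, ht, pow_succ' μ, MulAut.mul_apply]
          group

theorem pow_inv_mul_mul_apply_of_pow_eq_one {n : ℕ} (hμn : μ ^ n = 1) {t u : G} (ht : μ t = t)
    (hs : μ (u⁻¹ * t * μ u) = u⁻¹ * t * μ u) :
    (u⁻¹ * t * μ u) ^ n = u⁻¹ * t ^ n * u := by
  rw [pow_inv_mul_mul_apply ht hs, hμn, MulAut.one_apply]

theorem inv_mul_mul_apply_mul (t u v : G) :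
    (u * v)⁻¹ * t * μ (u * v) = v⁻¹ * (u⁻¹ * t * μ u) * μ v := by
  rw [map_mul]; group

theorem eq_inv_mul_mul_apply_of_mul_mul_inv_apply_eq {g g' t t' : G}
    (h : g' * t' * (μ g')⁻¹ = g * t * (μ g)⁻¹) :
    t' = (g⁻¹ * g')⁻¹ * t * μ (g⁻¹ * g') := by
  calc t' = g'⁻¹ * (g' * t' * (μ g')⁻¹) * μ g' := by group
    _ = (g⁻¹ * g')⁻¹ * t * μ (g⁻¹ * g') := by rw [h, map_mul, map_inv]; group

variable {T : Subgroup G}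

theorem apply_eq_of_inv_mul_mul_apply_eq (hT : ∀ a ∈ T, ∀ b ∈ T, a * b = b * a) {s v : G}
    (hs : s ∈ T) (hv : v ∈ T) (h : v⁻¹ * s * μ v = s) : μ v = v := by
  refine mul_left_cancel (a := s) ?_
  calc s * μ v = v * (v⁻¹ * s * μ v) := by group
    _ = s * v := by rw [h, hT v hv s hs]

theorem pow_inv_mul_mul_apply_mul_eq (hT : ∀ a ∈ T, ∀ b ∈ T, a * b = b * a) {n : ℕ}
    (hμn : μ ^ n = 1) {t u v : G} (ht : μ t = t)
    (hv : v ∈ T) (hs₀ : u⁻¹ * t * μ u ∈ T) (hfix₀ : μ (u⁻¹ * t * μ u) = u⁻¹ * t * μ u)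
    (hfix : μ ((u * v)⁻¹ * t * μ (u * v)) = (u * v)⁻¹ * t * μ (u * v)) :
    ((u * v)⁻¹ * t * μ (u * v)) ^ n = (u⁻¹ * t * μ u) ^ n := by
  rw [pow_inv_mul_mul_apply_of_pow_eq_one hμn ht hfix,
    pow_inv_mul_mul_apply_of_pow_eq_one hμn ht hfix₀]
  have hcomm := hT v hv _ (T.pow_mem hs₀ n)
  rw [pow_inv_mul_mul_apply_of_pow_eq_one hμn ht hfix₀] at hcomm
  calc (u * v)⁻¹ * t ^ n * (u * v) = v⁻¹ * (v * (u⁻¹ * t ^ n * u)) := by rw [hcomm]; group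
    _ = u⁻¹ * t ^ n * u := by group

end TwistedConjugation

section Counting

open scoped Classical

variable {G : Type*} [Group G] [Fintype G] {T : Subgroup G} {μ : MulAut G} {n : ℕ}

/-- `T_μ`, `T_{μ,n}` and the elements of `T` of order dividing `n`. -/
noncomputable def fixedFinset (T : Subgroup G) (μ : MulAut G) : Finset G :=
  {t | t ∈ T ∧ μ t = t}

noncomputable def regularFixedFinset (T : Subgroup G) (μ : MulAut G) (n : ℕ) : Finset G :=
  {t | t ∈ T ∧ μ t = t ∧ Subgroup.centralizer {t ^ n} = T}

noncomputable def torsionFinset (T : Subgroup G) (n : ℕ) : Finset G :=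
  {t | t ∈ T ∧ t ^ n = 1}

@[simp] theorem mem_fixedFinset {t : G} : t ∈ fixedFinset T μ ↔ t ∈ T ∧ μ t = t := by
  simp [fixedFinset]

@[simp] theorem mem_regularFixedFinset {t : G} :
    t ∈ regularFixedFinset T μ n ↔ t ∈ T ∧ μ t = t ∧ Subgroup.centralizer {t ^ n} = T := by
  simp [regularFixedFinset]

@[simp] theorem mem_torsionFinset {t : G} : t ∈ torsionFinset T n ↔ t ∈ T ∧ t ^ n = 1 := by
  simp [torsionFinset]

theorem card_fixedFinset : #(fixedFinset T μ) = Nat.card {t | t ∈ T ∧ μ t = t} := by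
  rw [Nat.card_eq_card_toFinset]; congr; ext; simp

theorem card_regularFixedFinset :
    #(regularFixedFinset T μ n) =
      Nat.card {t | t ∈ T ∧ μ t = t ∧ Subgroup.centralizer {t ^ n} = T} := by
  rw [Nat.card_eq_card_toFinset]; congr; ext; simp

theorem card_torsionFinset : #(torsionFinset T n) = Nat.card {t | t ∈ T ∧ t ^ n = 1} := by
  rw [Nat.card_eq_card_toFinset]; congr; ext; simp

noncomputable def twistedOrbits (μ : MulAut G) (S : Finset G) : Finset G :=
  (univ ×ˢ S).image fun p : G × G => p.1 * p.2 * (μ p.1)⁻¹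

theorem mem_twistedOrbits {S : Finset G} {x : G} :
    x ∈ twistedOrbits μ S ↔ ∃ g, ∃ y ∈ S, g * y * (μ g)⁻¹ = x := by
  simp [twistedOrbits]

theorem twistedOrbits_mono {S S' : Finset G} (h : S ⊆ S') :
    twistedOrbits μ S ⊆ twistedOrbits μ S' := by
  unfold twistedOrbits
  exact image_subset_image (product_subset_product_right h)

theorem mem_normalizer_of_inv_mul_mul_apply_mem (hμn : μ ^ n = 1) {t u : G}
    (ht : t ∈ regularFixedFinset T μ n) (hu : u⁻¹ * t * μ u ∈ regularFixedFinset T μ n) :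
    u ∈ Subgroup.normalizer (T : Set G) := by
  rw [mem_regularFixedFinset] at ht hu
  rw [pow_inv_mul_mul_apply_of_pow_eq_one hμn ht.2.1 hu.2.1] at hu
  exact Subgroup.mem_normalizer_of_centralizer_eq ht.2.2 hu.2.2

theorem exists_mem_fixedFinset_ne_one_pow_eq_one {m : ℕ} (hm : m.Prime)
    (hdvd : m ∣ #(fixedFinset T μ)) : ∃ z ∈ fixedFinset T μ, z ≠ 1 ∧ z ^ m = 1 := by
  let K : Subgroup G := T ⊓ (μ : G →* G).eqLocus (MonoidHom.id G)
  have hK : ∀ z, z ∈ K ↔ z ∈ fixedFinset T μ := fun z => mem_fixedFinset.symm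
  have hcard : Nat.card K = #(fixedFinset T μ) := by
    rw [Nat.card_eq_fintype_card, ← Fintype.card_coe]
    exact Fintype.card_congr (Equiv.subtypeEquivRight hK)
  have : Fact m.Prime := ⟨hm⟩
  obtain ⟨z, hz⟩ := exists_prime_orderOf_dvd_card' m (hcard ▸ hdvd)
  have hz' : orderOf (z : G) = m := by rw [Subgroup.orderOf_coe, hz]
  exact ⟨z, (hK z).mp z.2, fun h => hm.one_lt.ne' (by rw [← hz', h, orderOf_one]),
    hz' ▸ pow_orderOf_eq_one _⟩

theorem regularFixedFinset_subset_fixedFinset : regularFixedFinset T μ n ⊆ fixedFinset T μ :=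
  fun _ ht => mem_fixedFinset.mpr ⟨(mem_regularFixedFinset.mp ht).1,
    (mem_regularFixedFinset.mp ht).2.1⟩

variable [DecidableEq G]

theorem card_transporter_inter_coset_le (hT : ∀ a ∈ T, ∀ b ∈ T, a * b = b * a)
    (hμn : μ ^ n = 1) {t u₀ : G} (ht : t ∈ regularFixedFinset T μ n)
    (hu₀ : u₀⁻¹ * t * μ u₀ ∈ regularFixedFinset T μ n) :
    #{u | u⁻¹ * t * μ u ∈ regularFixedFinset T μ n ∧ (u : G ⧸ T) = u₀} ≤
      #(fixedFinset T μ) * #(torsionFinset T n) := by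
  set S : Finset G := {u | u⁻¹ * t * μ u ∈ regularFixedFinset T μ n ∧ (u : G ⧸ T) = u₀}
  have ht_fix := (mem_regularFixedFinset.mp ht).2.1
  have hmem : ∀ u ∈ S, ∀ u' ∈ S, u⁻¹ * u' ∈ T ∧ (u⁻¹ * t * μ u) ∈ T ∧
      μ (u⁻¹ * t * μ u) = u⁻¹ * t * μ u := by
    intro u hu u' hu'
    simp only [S, mem_filter, mem_univ, true_and, mem_regularFixedFinset] at hu hu'
    obtain ⟨⟨hsT, hsfix, -⟩, hq⟩ := hu
    obtain ⟨-, hq'⟩ := hu'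
    exact ⟨QuotientGroup.eq.mp (hq.trans hq'.symm), hsT, hsfix⟩
  calc #S ≤ #(fixedFinset T μ) * #(S.image fun u => u⁻¹ * t * μ u) := by
        refine card_le_mul_card_image S _ fun s hs => ?_
        obtain ⟨u₁, hu₁, rfl⟩ := mem_image.mp hs
        refine card_le_card_of_injOn (u₁⁻¹ * ·) (fun u hu => ?_)
          (fun _ _ _ _ h => mul_left_cancel h)
        obtain ⟨hu, hψ⟩ := mem_filter.mp hu
        obtain ⟨hv, hs₁, -⟩ := hmem u₁ hu₁ u hu
        refine mem_fixedFinset.mpr ⟨hv, apply_eq_of_inv_mul_mul_apply_eq hT hs₁ hv ?_⟩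
        rw [← inv_mul_mul_apply_mul, mul_inv_cancel_left, hψ]
    _ ≤ #(fixedFinset T μ) * #(torsionFinset T n) := by
        refine Nat.mul_le_mul_left _ <| card_le_card_of_injOn ((u₀⁻¹ * t * μ u₀)⁻¹ * ·)
          (fun s hs => ?_) (fun _ _ _ _ h => mul_left_cancel h)
        obtain ⟨u, hu, rfl⟩ := mem_image.mp (mem_coe.mp hs)
        have hu₀S : u₀ ∈ S := mem_filter.mpr ⟨mem_univ _, hu₀, rfl⟩
        obtain ⟨hv, hs₀, hfix₀⟩ := hmem u₀ hu₀S u hu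
        obtain ⟨-, hs, hfix⟩ := hmem u hu u hu
        have hpow := pow_inv_mul_mul_apply_mul_eq hT hμn ht_fix hv hs₀ hfix₀
          (by rwa [mul_inv_cancel_left])
        rw [mul_inv_cancel_left] at hpow
        refine mem_torsionFinset.mpr ⟨T.mul_mem (T.inv_mem hs₀) hs, ?_⟩
        beta_reduce
        rw [(Commute.inv_left (hT _ hs₀ _ hs)).mul_pow, inv_pow, hpow, inv_mul_cancel]

theorem card_transporter_le (hT : ∀ a ∈ T, ∀ b ∈ T, a * b = b * a) (hμn : μ ^ n = 1) {t : G}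
    (ht : t ∈ regularFixedFinset T μ n) :
    #{u | u⁻¹ * t * μ u ∈ regularFixedFinset T μ n} ≤
      #(fixedFinset T μ) * #(torsionFinset T n) *
        T.relIndex (Subgroup.normalizer (T : Set G)) := by
  set W : Finset G := {u | u⁻¹ * t * μ u ∈ regularFixedFinset T μ n}
  calc #W ≤ #(fixedFinset T μ) * #(torsionFinset T n) *
        #(W.image (QuotientGroup.mk : G → G ⧸ T)) := by
        refine card_le_mul_card_image W _ fun q hq => ?_
        obtain ⟨u₀, hu₀, rfl⟩ := mem_image.mp hq
        rw [filter_filter]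
        exact card_transporter_inter_coset_le hT hμn ht (mem_filter.mp hu₀).2
    _ ≤ _ := Nat.mul_le_mul_left _ <| W.card_image_mk_le_relIndex fun u hu =>
        mem_normalizer_of_inv_mul_mul_apply_mem hμn ht (mem_filter.mp hu).2

theorem card_mul_card_regularFixedFinset_le (hT : ∀ a ∈ T, ∀ b ∈ T, a * b = b * a)
    (hμn : μ ^ n = 1) :
    Fintype.card G * #(regularFixedFinset T μ n) ≤
      #(fixedFinset T μ) * #(torsionFinset T n) * T.relIndex (Subgroup.normalizer (T : Set G)) *
        #(twistedOrbits μ (regularFixedFinset T μ n)) := by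
  rw [← card_univ, ← card_product]
  refine card_le_mul_card_image_of_maps_to (f := fun p : G × G => p.1 * p.2 * (μ p.1)⁻¹)
    (fun p hp => mem_twistedOrbits.mpr ⟨p.1, p.2, (mem_product.mp hp).2, rfl⟩) _
    fun x hx => ?_
  obtain ⟨g, t, ht, rfl⟩ := mem_twistedOrbits.mp hx
  refine (card_transporter_le hT hμn ht).trans' <|
    card_le_card_of_injOn (fun p => g⁻¹ * p.1) (fun p hp => ?_) (fun p hp q hq h => ?_)
  · obtain ⟨hp, hpx⟩ := mem_filter.mp hp
    refine mem_coe.mpr (mem_filter.mpr ⟨mem_univ _, ?_⟩)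
    rw [← eq_inv_mul_mul_apply_of_mul_mul_inv_apply_eq hpx]
    exact (mem_product.mp hp).2
  · have h₁ : p.1 = q.1 := mul_left_cancel h
    have hp₂ := eq_inv_mul_mul_apply_of_mul_mul_inv_apply_eq (mem_filter.mp hp).2
    have hq₂ := eq_inv_mul_mul_apply_of_mul_mul_inv_apply_eq (mem_filter.mp hq).2
    exact Prod.ext h₁ (by rw [hp₂, hq₂, h₁])

end Counting

section Coset

variable {H : Type*} [Group H] {G : Subgroup H} {h : H} {μ : MulAut G}

theorem commute_of_apply_eq (hμ : ∀ g : G, (μ g : H) = h * g * h⁻¹) {y : G} (hy : μ y = y) :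
    Commute (y : H) h := by
  have hconj := hμ y
  rw [hy] at hconj
  exact (mul_inv_eq_iff_eq_mul.mp hconj.symm).symm

theorem coe_mul_mul_inv_apply_mul_pow (hμ : ∀ g : G, (μ g : H) = h * g * h⁻¹) {y : G}
    (hy : μ y = y) (g : G) (m : ℕ) :
    (((g * y * (μ g)⁻¹ : G) : H) * h) ^ m = g * ((y ^ m : G) : H) * h ^ m * (g : H)⁻¹ := by
  have hconj : ((g * y * (μ g)⁻¹ : G) : H) * h = g * ((y : H) * h) * (g : H)⁻¹ := by
    push_cast [hμ]; group
  rw [hconj, conj_pow, (commute_of_apply_eq hμ hy).mul_pow]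
  push_cast; group

theorem card_setOf_coset_pow [DecidableEq H] [Fintype G] (m : ℕ) :
    Nat.card {y : H | ∃ g : H, g ∈ G ∧ y = (g * h) ^ m} =
      #(univ.image fun x : G => ((x : H) * h) ^ m) := by
  have hset : {y : H | ∃ g : H, g ∈ G ∧ y = (g * h) ^ m} =
      ↑(univ.image fun x : G => ((x : H) * h) ^ m) := by
    ext y; simp [eq_comm]
  rw [hset, Nat.card_coe_set_eq, Set.ncard_coe_finset]

theorem exists_ne_coe_mul_pow_eq [Fintype G] (hμ : ∀ g : G, (μ g : H) = h * g * h⁻¹)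
    {T : Subgroup G} (hT : ∀ a ∈ T, ∀ b ∈ T, a * b = b * a) {m : ℕ} {z : G}
    (hz : z ∈ fixedFinset T μ) (hz₁ : z ≠ 1) (hzm : z ^ m = 1) :
    ∀ x ∈ twistedOrbits μ (fixedFinset T μ), ∃ x' ∈ twistedOrbits μ (fixedFinset T μ),
      x' ≠ x ∧ ((x' : H) * h) ^ m = ((x : H) * h) ^ m := by
  intro x hx
  obtain ⟨g, y, hyS, rfl⟩ := mem_twistedOrbits.mp hx
  obtain ⟨hyT, hy⟩ := mem_fixedFinset.mp hyS
  obtain ⟨hzT, hzμ⟩ := mem_fixedFinset.mp hz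
  have hyz : μ (y * z) = y * z := by rw [map_mul, hy, hzμ]
  refine ⟨g * (y * z) * (μ g)⁻¹, mem_twistedOrbits.mpr ⟨g, y * z,
    mem_fixedFinset.mpr ⟨T.mul_mem hyT hzT, hyz⟩, rfl⟩, fun heq => hz₁ ?_, ?_⟩
  · simpa using mul_right_cancel heq
  · rw [coe_mul_mul_inv_apply_mul_pow hμ hyz, coe_mul_mul_inv_apply_mul_pow hμ hy,
      Commute.mul_pow (hT y hyT z hzT), hzm, mul_one]

end Coset

theorem le_one_sub_inv_mul_of_card_bounds {N P A B a b c r : ℕ} (ha : 0 < a) (hc : 0 < c)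
    (hr : 0 < r) (hb : (3 / 4 : ℝ) * a ≤ b) (horbit : N * b ≤ a * c * r * A) (hAB : A ≤ B)
    (hpow : 2 * P + B ≤ 2 * N) :
    (P : ℝ) ≤ (1 - 1 / (4 * (c : ℝ) * r)) * N := by
  have hcr : (0 : ℝ) < 4 * c * r := by positivity
  have hA : 3 * (N : ℝ) ≤ 4 * c * r * A := by
    have horbit' : (N : ℝ) * b ≤ a * c * r * A := by exact_mod_cast horbit
    refine le_of_mul_le_mul_left ?_ (show (0 : ℝ) < a by exact_mod_cast ha)
    nlinarith [Nat.cast_nonneg (α := ℝ) N]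
  have hAP : (A : ℝ) + 2 * P ≤ 2 * N := by exact_mod_cast (by omega : A + 2 * P ≤ 2 * N)
  rw [sub_mul, one_mul, one_div_mul_eq_div, le_sub_comm, div_le_iff₀ hcr]
  nlinarith [Nat.cast_nonneg (α := ℝ) N]

theorem power_proportion_general {H : Type*} [Group H] [Finite H]
    (m : ℕ) (hm : m.Prime)
    (G : Subgroup H) (h : H)
    (μ : MulAut ↥G) (hμ : ∀ g : ↥G, ((μ g : ↥G) : H) = h * (g : H) * h⁻¹)
    (n : ℕ) (hn : n = orderOf μ)
    (T : Subgroup ↥G)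
    (hcomm : ∀ a ∈ T, ∀ b ∈ T, a * b = b * a)
    (c : ℕ) (hc : c = Nat.card {t : ↥G | t ∈ T ∧ t ^ n = 1})
    (h1 : m ∣ Nat.card {t : ↥G | t ∈ T ∧ μ t = t})
    (h2 : (3 / 4 : ℝ) * (Nat.card {t : ↥G | t ∈ T ∧ μ t = t} : ℝ) ≤
      (Nat.card {t : ↥G | t ∈ T ∧ μ t = t ∧ Subgroup.centralizer {t ^ n} = T} : ℝ)) :
    (Nat.card {y : H | ∃ g : H, g ∈ G ∧ y = (g * h) ^ m} : ℝ) ≤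
      (1 - 1 / (4 * (c : ℝ) * (T.relIndex (Subgroup.normalizer (T : Set ↥G)) : ℝ))) * (Nat.card G : ℝ) := by
  classical
  have : Fintype G := Fintype.ofFinite G
  have hμn : μ ^ n = 1 := hn ▸ pow_orderOf_eq_one μ
  rw [← card_fixedFinset] at h1 h2
  rw [← card_regularFixedFinset] at h2
  rw [hc, ← card_torsionFinset, card_setOf_coset_pow, Nat.card_eq_fintype_card]
  obtain ⟨z, hz, hz₁, hzm⟩ := exists_mem_fixedFinset_ne_one_pow_eq_one hm h1
  refine le_one_sub_inv_mul_of_card_bounds (card_pos.mpr ⟨1, by simp⟩)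
    (card_pos.mpr ⟨1, by simp⟩) (Nat.pos_of_ne_zero Subgroup.index_ne_zero_of_finite) h2
    (card_mul_card_regularFixedFinset_le hcomm hμn)
    (card_le_card (twistedOrbits_mono regularFixedFinset_subset_fixedFinset))
    (card_univ (α := G) ▸ two_mul_card_image_add_card_le _ (subset_univ _)
      (exists_ne_coe_mul_pow_eq hμ hcomm hz hz₁ hzm))

/-- **Power proportion in a coset.** Let `m` be prime, `H` a finite group with a
normal subgroup `G`, `h ∈ H`, and let `μ ∈ Aut(G)` be conjugation by `h`, of order
`n`. Let `T ≤ G` be a maximal abelian subgroup with `μ(T) = T`, and let `c` be the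
number of elements of `T` of order dividing `n`. If `m` divides `|T_μ|` and
`|T_{μ,n}| ≥ (3/4)|T_μ|`, then
`|{x^m : x ∈ Gh}| ≤ (1 − 1/(4c[N_G(T):T]))·|G|`. -/
theorem power_proportion {H : Type*} [Group H] [Finite H]
    (m : ℕ) (hm : m.Prime)
    (G : Subgroup H) (hG : G.Normal) (h : H)
    (μ : MulAut ↥G) (hμ : ∀ g : ↥G, ((μ g : ↥G) : H) = h * (g : H) * h⁻¹)
    (n : ℕ) (hn : n = orderOf μ)
    (T : Subgroup ↥G)
    (hcomm : ∀ a ∈ T, ∀ b ∈ T, a * b = b * a)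
    (hmax : ∀ T' : Subgroup ↥G, (∀ a ∈ T', ∀ b ∈ T', a * b = b * a) → T ≤ T' → T' = T)
    (hμT : ∀ g : ↥G, g ∈ T ↔ μ g ∈ T)
    (c : ℕ) (hc : c = Nat.card {t : ↥G | t ∈ T ∧ t ^ n = 1})
    (h1 : m ∣ Nat.card {t : ↥G | t ∈ T ∧ μ t = t})
    (h2 : (3 / 4 : ℝ) * (Nat.card {t : ↥G | t ∈ T ∧ μ t = t} : ℝ) ≤
      (Nat.card {t : ↥G | t ∈ T ∧ μ t = t ∧ Subgroup.centralizer {t ^ n} = T} : ℝ)) :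
    (Nat.card {y : H | ∃ g : H, g ∈ G ∧ y = (g * h) ^ m} : ℝ) ≤
      (1 - 1 / (4 * (c : ℝ) * (T.relIndex (Subgroup.normalizer (T : Set ↥G)) : ℝ))) * (Nat.card G : ℝ) :=
  power_proportion_general m hm G h μ hμ n hn T hcomm c hc h1 h2
end

section
/- Let G be a finite group containing a normal subgroup H. Then every coset of H in G has a representative g such that every prime divisor of the order of g divides the index [G : H]. -/
/-!
Let `m = ord(x)` and `n = [G : H]`. Split `m = a * b`, where `a` collects the prime powers of `m`
at primes dividing `n` and `b` is coprime to `n`. The order `d` of `xH` divides `n`, so `b` is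
coprime to `d`, and the Chinese remainder theorem gives `k ≡ 0 (mod b)`, `k ≡ 1 (mod d)`. Then
`x ^ k` lies in `xH`, and its order divides `a`.
-/

theorem Nat.exists_eq_mul_prime_dvd_coprime {m : ℕ} (hm : m ≠ 0) (n : ℕ) :
    ∃ a b, m = a * b ∧ (∀ p, p.Prime → p ∣ a → p ∣ n) ∧ b.Coprime n := by
  induction m using Nat.recOnMul with
  | zero => exact absurd rfl hm
  | one => exact ⟨1, 1, rfl, fun p hp h => absurd h hp.not_dvd_one,
      Nat.coprime_one_left n⟩
  | prime q hq =>
    by_cases hqn : q ∣ n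
    · exact ⟨q, 1, (mul_one q).symm,
        fun p hp hpq => (Nat.prime_dvd_prime_iff_eq hp hq).mp hpq ▸ hqn, Nat.coprime_one_left n⟩
    · exact ⟨1, q, (one_mul q).symm, fun p hp h => absurd h hp.not_dvd_one,
        (Nat.Prime.coprime_iff_not_dvd hq).mpr hqn⟩
  | mul m₁ m₂ ih₁ ih₂ =>
    obtain ⟨a₁, b₁, rfl, ha₁, hb₁⟩ := ih₁ (left_ne_zero_of_mul hm)
    obtain ⟨a₂, b₂, rfl, ha₂, hb₂⟩ := ih₂ (right_ne_zero_of_mul hm)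
    refine ⟨a₁ * a₂, b₁ * b₂, by ring, fun p hp h => ?_, hb₁.mul_left hb₂⟩
    rcases (Nat.Prime.dvd_mul hp).mp h with h | h
    exacts [ha₁ p hp h, ha₂ p hp h]

theorem exists_pow_map_eq_orderOf_dvd {G M : Type*} [Monoid G] [Monoid M] (φ : G →* M)
    {x : G} {a b : ℕ} (hab : orderOf x = a * b) (hb : b.Coprime (orderOf (φ x))) :
    ∃ k, φ (x ^ k) = φ x ∧ orderOf (x ^ k) ∣ a := by
  obtain ⟨k, hk₀, hk₁⟩ := Nat.chineseRemainder hb 0 1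
  refine ⟨k, ?_, orderOf_dvd_of_pow_eq_one ?_⟩
  · rw [map_pow, ← pow_mod_orderOf, hk₁, pow_mod_orderOf, pow_one]
  · obtain ⟨c, rfl⟩ := Nat.modEq_zero_iff_dvd.mp hk₀
    rw [← pow_mul, orderOf_dvd_iff_pow_eq_one.mp]
    exact hab ▸ ⟨c, by ring⟩

/-- **Coset representatives of restricted order.** Let `G` be a finite group with a
normal subgroup `H`. Then every coset of `H` in `G` has a representative `g` such that
every prime divisor of `ord(g)` divides the index `[G : H]`. -/
theorem coset_representative_order {G : Type*} [Group G] [Finite G]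
    (H : Subgroup G) (hH : H.Normal) :
    ∀ C : G ⧸ H, ∃ g : G, QuotientGroup.mk g = C ∧
      ∀ p : ℕ, p.Prime → p ∣ orderOf g → p ∣ H.index := by
  intro C
  obtain ⟨x, rfl⟩ := QuotientGroup.mk_surjective C
  obtain ⟨a, b, hab, ha, hb⟩ := Nat.exists_eq_mul_prime_dvd_coprime (orderOf_pos x).ne' H.index
  have hd : orderOf (QuotientGroup.mk' H x) ∣ H.index :=
    H.index_eq_card ▸ orderOf_dvd_natCard _
  obtain ⟨k, hk, hka⟩ :=
    exists_pow_map_eq_orderOf_dvd (QuotientGroup.mk' H) hab (hb.coprime_dvd_right hd)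
  exact ⟨x ^ k, hk, fun p hp hpk => ha p hp (hpk.trans hka)⟩
end
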